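/- arXiv:1301.6495 — 10 statements merged into one kernel-verified Lean document; each statement's English description precedes it below -/
import Mathlib

section
/- Let n, m ≥ 0 and a ∈ ℤ, and let M = [n; a + mw] = n·1·ℤ + (a·1 + m·w)·ℤ be the corresponding ℤ-submodule of 𝒪_D; assume M is regular (contains a non-zero-divisor of ℤ × ℤ). Then M is an ideal of 𝒪_D if and only if m ∣ n, m ∣ a (say a = m·b for some b ∈ ℤ), and n ∣ m·b·(b + d) (equivalently, n ∣ m·N(b·1 + w)). -/
/-!
Since `𝒪_D = ℤ·1 + ℤ·w`, the lattice `M = [n; a + m w]` is an ideal iff `w·n` and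
`w·(a + m w) = (a + m d)·w` lie in `M` (as `w² = d w`). Comparing coordinates,
`c·w = u·n + v·(a + m w)` iff `u n + v a = 0` and `c = v m`. For `c = a + m d` this says `a = m b`
with `b = v - d` and `n ∣ m b (b + d)`; given `m ∣ a`, for `c = n` it says `m ∣ n`.
-/

/-- The quadratic order `𝒪_D` of square discriminant `D = d²`,
realized as the subring `{(x,y) ∈ ℤ × ℤ : x ≡ y (mod d)}` of `ℤ × ℤ`. -/
def Od (d : ℤ) : Subring (ℤ × ℤ) where
  carrier := {z | d ∣ z.1 - z.2}
  one_mem' := by simp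
  zero_mem' := by simp
  mul_mem' := by
    rintro a b ha hb
    show d ∣ a.1 * b.1 - a.2 * b.2
    have h : a.1 * b.1 - a.2 * b.2 = (a.1 - a.2) * b.1 + a.2 * (b.1 - b.2) := by ring
    rw [h]
    exact dvd_add (ha.mul_right b.1) (hb.mul_left a.2)
  add_mem' := by
    rintro a b ha hb
    show d ∣ a.1 + b.1 - (a.2 + b.2)
    have h : a.1 + b.1 - (a.2 + b.2) = (a.1 - a.2) + (b.1 - b.2) := by ring
    rw [h]
    exact dvd_add ha hb
  neg_mem' := by
    rintro a ha
    show d ∣ -a.1 - -a.2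
    have h : -a.1 - -a.2 = -(a.1 - a.2) := by ring
    rw [h]
    exact ha.neg_right

lemma mem_Od {d : ℤ} {z : ℤ × ℤ} : z ∈ Od d ↔ d ∣ z.1 - z.2 := Iff.rfl

/-- The element `w = (0, d)` of the standard basis of `𝒪_D`. -/
def wd (d : ℤ) : Od d := ⟨(0, d), mem_Od.mpr ⟨-1, by ring⟩⟩

section SpanPair

variable {R A : Type*} [CommSemiring R] [Semiring A] [Algebra R A]

theorem mul_mem_span_of_forall_mul_mem {s : Set A} {w : A}
    (hA : Submodule.span R {1, w} = ⊤) (hw : ∀ e ∈ s, w * e ∈ Submodule.span R s)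
    (r : A) {x : A} (hx : x ∈ Submodule.span R s) : r * x ∈ Submodule.span R s := by
  have hw_span : ∀ y ∈ Submodule.span R s, w * y ∈ Submodule.span R s := by
    intro y hy
    induction hy using Submodule.span_induction with
    | mem e he => exact hw e he
    | zero => simp
    | add y z _ _ hy hz => rw [mul_add]; exact add_mem hy hz
    | smul c y _ hy => rw [mul_smul_comm]; exact Submodule.smul_mem _ c hy
  obtain ⟨α, β, rfl⟩ := Submodule.mem_span_pair.mp (hA ▸ Submodule.mem_top : r ∈ _)
  rw [add_mul, smul_mul_assoc, smul_mul_assoc, one_mul]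
  exact add_mem (Submodule.smul_mem _ α hx) (Submodule.smul_mem _ β (hw_span x hx))

theorem forall_mul_mem_span_pair_iff {e₁ e₂ w : A} (hA : Submodule.span R {1, w} = ⊤) :
    (∀ r : A, ∀ x ∈ Submodule.span R {e₁, e₂}, r * x ∈ Submodule.span R {e₁, e₂}) ↔
      w * e₁ ∈ Submodule.span R {e₁, e₂} ∧ w * e₂ ∈ Submodule.span R {e₁, e₂} := by
  refine ⟨fun h ↦ ⟨h w e₁ ?_, h w e₂ ?_⟩, fun h r x hx ↦ ?_⟩
  · exact Submodule.subset_span (by simp)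
  · exact Submodule.subset_span (by simp)
  · refine mul_mem_span_of_forall_mul_mem hA ?_ r hx
    rintro e (rfl | rfl)
    exacts [h.1, h.2]

end SpanPair

namespace Od

variable {d : ℤ}

@[simp] theorem coe_wd : ((wd d : Od d) : ℤ × ℤ) = (0, d) := rfl

theorem wd_mul_wd : wd d * wd d = d • wd d :=
  Subtype.ext (Prod.ext (by simp) (by simp))

theorem coe_zsmul_wd (c : ℤ) : ((c • wd d : Od d) : ℤ × ℤ) = (0, c * d) := by
  ext <;> simp

theorem coe_zsmul_one_add_zsmul_wd (x t : ℤ) :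
    ((x • 1 + t • wd d : Od d) : ℤ × ℤ) = (x, x + t * d) := by
  ext <;> simp

theorem span_one_wd : Submodule.span ℤ {1, wd d} = ⊤ := by
  refine Submodule.eq_top_iff'.mpr fun r ↦ Submodule.mem_span_pair.mpr ?_
  obtain ⟨t, ht⟩ := mem_Od.mp r.2
  refine ⟨(r : ℤ × ℤ).1, -t, Subtype.ext ?_⟩
  rw [coe_zsmul_one_add_zsmul_wd]
  ext <;> simp; linarith

theorem zsmul_wd_mem_span_iff (hd : d ≠ 0) (n a m c : ℤ) :
    c • wd d ∈ Submodule.span ℤ {n • (1 : Od d), a • 1 + m • wd d} ↔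
      ∃ u v : ℤ, u * n + v * a = 0 ∧ c = v * m := by
  rw [Submodule.mem_span_pair]
  refine exists₂_congr fun u v ↦ ?_
  have hcomb : u • n • (1 : Od d) + v • (a • 1 + m • wd d) =
      (u * n + v * a) • 1 + (v * m) • wd d := by
    module
  rw [hcomb, eq_comm, Subtype.ext_iff, coe_zsmul_one_add_zsmul_wd, coe_zsmul_wd, Prod.ext_iff]
  dsimp only
  constructor
  · rintro ⟨h₁, h₂⟩
    exact ⟨h₁.symm, mul_right_cancel₀ hd (by linarith)⟩
  · rintro ⟨h₁, rfl⟩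
    exact ⟨h₁.symm, by rw [h₁]; ring⟩

end Od

theorem exists_mul_add_mul_eq_zero_and_eq_mul_iff_dvd {n m a : ℤ} (hma : m ∣ a) :
    (∃ u v : ℤ, u * n + v * a = 0 ∧ n = v * m) ↔ m ∣ n := by
  constructor
  · rintro ⟨-, v, -, rfl⟩
    exact dvd_mul_left m v
  · rintro ⟨c, rfl⟩
    obtain ⟨b, rfl⟩ := hma
    exact ⟨-b, c, by ring, by ring⟩

theorem exists_mul_add_mul_eq_zero_and_add_mul_eq_mul_iff (n m a d : ℤ) :
    (∃ u v : ℤ, u * n + v * a = 0 ∧ a + m * d = v * m) ↔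
      ∃ b : ℤ, a = m * b ∧ n ∣ m * (b * (b + d)) := by
  constructor
  · rintro ⟨u, v, h₀, hv⟩
    refine ⟨v - d, by linarith, -u, ?_⟩
    linear_combination (-v) * hv + h₀
  · rintro ⟨b, rfl, k, hk⟩
    exact ⟨-k, b + d, by linear_combination hk, by ring⟩

theorem z_module_is_ideal_iff_general (d : ℤ) (hd : 1 ≤ d) (n m a : ℤ)
    (M : Set (Od d))
    (hM : M = {x : Od d | ∃ u v : ℤ,
        x = u • (n • (1 : Od d)) + v • (a • (1 : Od d) + m • wd d)}) :
    (∀ r : Od d, ∀ x ∈ M, r * x ∈ M) ↔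
      (m ∣ n ∧ ∃ b : ℤ, a = m * b ∧ n ∣ m * (b * (b + d))) := by
  have hM_span : M = Submodule.span ℤ {n • (1 : Od d), a • 1 + m • wd d} := by
    ext x
    simp only [hM, Set.mem_ofPred_eq, SetLike.mem_coe, Submodule.mem_span_pair, eq_comm]
  have hw₂ : wd d * (a • 1 + m • wd d) = (a + m * d) • wd d := by
    rw [mul_add, mul_smul_one, mul_smul_comm, Od.wd_mul_wd, smul_smul, ← add_smul, mul_comm]
  simp only [hM_span, SetLike.mem_coe]
  rw [forall_mul_mem_span_pair_iff Od.span_one_wd, mul_smul_one, hw₂,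
    Od.zsmul_wd_mem_span_iff (by omega), Od.zsmul_wd_mem_span_iff (by omega),
    exists_mul_add_mul_eq_zero_and_add_mul_eq_mul_iff]
  exact and_congr_left fun ⟨b, hab, _⟩ ↦ exists_mul_add_mul_eq_zero_and_eq_mul_iff_dvd ⟨b, hab⟩

/-- Proposition A.7: a regular `ℤ`-submodule `M = [n; a + mw]` of `𝒪_D`
is an ideal if and only if `m ∣ n`, `m ∣ a` (say `a = m·b`), and `n ∣ m·N(b·1 + w) = m·b·(b+d)`. -/
theorem z_module_is_ideal_iff (d : ℤ) (hd : 1 ≤ d) (n m a : ℤ) (hn : 0 ≤ n) (hm : 0 ≤ m)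
    (M : Set (Od d))
    (hM : M = {x : Od d | ∃ u v : ℤ,
        x = u • (n • (1 : Od d)) + v • (a • (1 : Od d) + m • wd d)})
    (hreg : ∃ z ∈ M, ((z : ℤ × ℤ)) ∈ nonZeroDivisors (ℤ × ℤ)) :
    (∀ r : Od d, ∀ x ∈ M, r * x ∈ M) ↔
      (m ∣ n ∧ ∃ b : ℤ, a = m * b ∧ n ∣ m * (b * (b + d))) :=
  z_module_is_ideal_iff_general d hd n m a M hM
end

section
/- Assume d is squarefree. For x, y ∈ ℚ, the pair z = (x,y) lies in 𝒪_D (i.e., x, y ∈ ℤ and x ≡ y (mod d)) if and only if x + y ∈ ℤ, x·y ∈ ℤ, and there exists v ∈ ℤ such that x + y ≡ 2v (mod d) and x·y ≡ v² (mod d). -/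
theorem IsIntegrallyClosed.exists_algebraMap_eq_of_sq_sub_mul_add_eq_zero
    {R K : Type*} [CommRing R] [IsIntegrallyClosed R] [Field K] [Algebra R K]
    [IsFractionRing R K] {s n : R} {t : K}
    (ht : t ^ 2 - algebraMap R K s * t + algebraMap R K n = 0) :
    ∃ a : R, algebraMap R K a = t := by
  refine IsIntegrallyClosed.isIntegral_iff.mp
    ⟨Polynomial.X ^ 2 - Polynomial.C s * Polynomial.X + Polynomial.C n, by monicity!, ?_⟩
  simpa [Polynomial.eval₂_sub, Polynomial.eval₂_add, Polynomial.eval₂_mul] using ht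

theorem Int.exists_cast_eq_of_sq_sub_mul_add_eq_zero {s n : ℤ} {t : ℚ}
    (ht : t ^ 2 - s * t + n = 0) : ∃ a : ℤ, (a : ℚ) = t := by
  obtain ⟨a, ha⟩ := IsIntegrallyClosed.exists_algebraMap_eq_of_sq_sub_mul_add_eq_zero
    (R := ℤ) (K := ℚ) (s := s) (n := n) (by simpa using ht)
  exact ⟨a, by simpa using ha⟩

theorem IsRadical.dvd_and_dvd_of_dvd_add_of_dvd_mul {R : Type*} [CommRing R] {d u w : R}
    (hd : IsRadical d) (hsum : d ∣ u + w) (hprod : d ∣ u * w) : d ∣ u ∧ d ∣ w := by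
  have hw : d ∣ w := hd 2 w <| by
    convert dvd_sub (hsum.mul_left w) hprod using 1; ring
  exact ⟨by simpa using dvd_sub hsum hw, hw⟩

theorem IsRadical.dvd_sub_iff_exists_trace_norm {R : Type*} [CommRing R] {d : R}
    (hd : IsRadical d) (a b : R) :
    d ∣ a - b ↔ ∃ v, d ∣ a + b - 2 * v ∧ d ∣ a * b - v ^ 2 := by
  constructor
  · rintro ⟨k, hk⟩
    exact ⟨a, ⟨-k, by linear_combination -hk⟩, ⟨-a * k, by linear_combination -a * hk⟩⟩
  · rintro ⟨v, htr, hnm⟩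
    have hsum : d ∣ (a - v) + (b - v) := by
      convert htr using 1; ring
    have hprod : d ∣ (a - v) * (b - v) := by
      convert dvd_sub hnm (htr.mul_left v) using 1; ring
    obtain ⟨ha, hb⟩ := hd.dvd_and_dvd_of_dvd_add_of_dvd_mul hsum hprod
    convert dvd_sub ha hb using 1; ring

theorem mem_Od_iff_trace_norm_general (d : ℤ) (hsf : Squarefree d) (x y : ℚ) :
    (∃ z : Od d, ((z : ℤ × ℤ).1 : ℚ) = x ∧ ((z : ℤ × ℤ).2 : ℚ) = y) ↔
      ∃ s nn : ℤ, x + y = (s : ℚ) ∧ x * y = (nn : ℚ) ∧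
        ∃ v : ℤ, d ∣ s - 2 * v ∧ d ∣ nn - v ^ 2 := by
  have hrad : IsRadical d := hsf.isRadical
  constructor
  · rintro ⟨⟨⟨a, b⟩, hab⟩, rfl, rfl⟩
    exact ⟨a + b, a * b, by push_cast; rfl, by push_cast; rfl,
      (hrad.dvd_sub_iff_exists_trace_norm a b).mp (mem_Od.mp hab)⟩
  · rintro ⟨s, nn, hs, hn, hv⟩
    have hroot : ∀ t, t = x ∨ t = y → ∃ a : ℤ, (a : ℚ) = t := fun t ht ↦
      Int.exists_cast_eq_of_sq_sub_mul_add_eq_zero (s := s) (n := nn) <| by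
        rw [← hs, ← hn]; rcases ht with rfl | rfl <;> ring
    obtain ⟨a, rfl⟩ := hroot x (.inl rfl)
    obtain ⟨b, rfl⟩ := hroot y (.inr rfl)
    obtain rfl : a + b = s := by exact_mod_cast hs
    obtain rfl : a * b = nn := by exact_mod_cast hn
    exact ⟨⟨(a, b), mem_Od.mpr ((hrad.dvd_sub_iff_exists_trace_norm a b).mpr hv)⟩, rfl, rfl⟩

/-- Lemma A.2: for squarefree `d`, a pair `z = (x,y)` of rationals lies in
`𝒪_D` iff its trace `x + y` and norm `x·y` are integers `s`, `nn` with `s ≡ 2v (mod d)` and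
`nn ≡ v² (mod d)` for some `v ∈ ℤ`. -/
theorem mem_Od_iff_trace_norm (d : ℤ) (hd : 1 ≤ d) (hsf : Squarefree d) (x y : ℚ) :
    (∃ z : Od d, ((z : ℤ × ℤ).1 : ℚ) = x ∧ ((z : ℤ × ℤ).2 : ℚ) = y) ↔
      ∃ s nn : ℤ, x + y = (s : ℚ) ∧ x * y = (nn : ℚ) ∧
        ∃ v : ℤ, d ∣ s - 2 * v ∧ d ∣ nn - v ^ 2 :=
  mem_Od_iff_trace_norm_general d hsf x y
end

section
/- Let p ∈ ℤ be a prime number with p ∣ d, and let m, x ∈ 𝒪_D. If (p,p) divides m·x in 𝒪_D and p does not divide N(m), then (p,p) divides x in 𝒪_D. -/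
/-!
Since `p` is prime and divides neither `m₁` nor `m₂`, `(p, p) ∣ m x` forces `x = p • z` with
`z ∈ ℤ × ℤ` and `m z ∈ 𝒪_D`. Then `d` divides both `p (z₁ - z₂)` and `m₂ (z₁ - z₂)`, and `p` is
coprime to `m₂`, so `d ∣ z₁ - z₂`, i.e. `z ∈ 𝒪_D`.
-/

theorem IsCoprime.dvd_of_dvd_mul_of_dvd_mul {R : Type*} [CommRing R] {a b k w : R}
    (h : IsCoprime a b) (ha : k ∣ a * w) (hb : k ∣ b * w) : k ∣ w := by
  obtain ⟨u, v, huv⟩ := h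
  have hw : w = u * (a * w) + v * (b * w) := by linear_combination (-w) * huv
  rw [hw]
  exact dvd_add (ha.mul_left u) (hb.mul_left v)

namespace Od

variable {d : ℤ}

-- `d` divides `n (z₁ - z₂)` and `m₂ (z₁ - z₂) = (m₁ z₁ - m₂ z₂) - (m₁ - m₂) z₁`.
lemma mem_of_smul_mem_of_mul_mem {n : ℤ} {m z : ℤ × ℤ} (hm : m ∈ Od d) (hnm : IsCoprime n m.2)
    (hnz : n • z ∈ Od d) (hmz : m * z ∈ Od d) : z ∈ Od d := by
  rw [mem_Od] at hm hnz hmz ⊢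
  refine hnm.dvd_of_dvd_mul_of_dvd_mul ?_ ?_
  · simpa only [Prod.smul_fst, Prod.smul_snd, smul_eq_mul, mul_sub] using hnz
  · have h : m.2 * (z.1 - z.2) = (m * z).1 - (m * z).2 - (m.1 - m.2) * z.1 := by
      simp only [Prod.fst_mul, Prod.snd_mul]; ring
    rw [h]
    exact dvd_sub hmz (hm.mul_right _)

lemma intCast_dvd_of_eq_smul {n : ℤ} {x : Od d} {z : ℤ × ℤ} (hz : z ∈ Od d)
    (hx : (x : ℤ × ℤ) = n • z) : (n : Od d) ∣ x :=
  ⟨⟨z, hz⟩, Subtype.ext (by rw [hx, zsmul_eq_mul]; rfl)⟩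

lemma dvd_fst_of_intCast_dvd {n : ℤ} {y : Od d} (h : (n : Od d) ∣ y) : n ∣ (y : ℤ × ℤ).1 := by
  simpa using map_dvd ((RingHom.fst ℤ ℤ).comp (Od d).subtype) h

lemma dvd_snd_of_intCast_dvd {n : ℤ} {y : Od d} (h : (n : Od d) ∣ y) : n ∣ (y : ℤ × ℤ).2 := by
  simpa using map_dvd ((RingHom.snd ℤ ℤ).comp (Od d).subtype) h

end Od

theorem dvd_of_dvd_mul_of_not_dvd_norm_general (d : ℤ) (p : ℤ) (hp : Prime p)
    (m x : Od d) (h : (p : Od d) ∣ m * x)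
    (hN : ¬ p ∣ (m : ℤ × ℤ).1 * (m : ℤ × ℤ).2) :
    (p : Od d) ∣ x := by
  have hm₁ : ¬ p ∣ (m : ℤ × ℤ).1 := fun hdvd => hN (hdvd.mul_right _)
  have hm₂ : ¬ p ∣ (m : ℤ × ℤ).2 := fun hdvd => hN (hdvd.mul_left _)
  obtain ⟨a, ha⟩ : p ∣ (x : ℤ × ℤ).1 :=
    (hp.dvd_or_dvd (Od.dvd_fst_of_intCast_dvd h)).resolve_left hm₁
  obtain ⟨b, hb⟩ : p ∣ (x : ℤ × ℤ).2 :=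
    (hp.dvd_or_dvd (Od.dvd_snd_of_intCast_dvd h)).resolve_left hm₂
  have hx : (x : ℤ × ℤ) = p • (a, b) := Prod.ext ha hb
  obtain ⟨c, hc⟩ := h
  have hc' : (c : ℤ × ℤ) = m * (a, b) := by
    refine smul_right_injective (ℤ × ℤ) hp.ne_zero ?_
    calc p • (c : ℤ × ℤ) = ((p * c : Od d) : ℤ × ℤ) := by simp [zsmul_eq_mul]
      _ = (m : ℤ × ℤ) * x := by rw [← hc, Subring.coe_mul]
      _ = p • ((m : ℤ × ℤ) * (a, b)) := by rw [hx, mul_smul_comm]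
  exact Od.intCast_dvd_of_eq_smul
    (Od.mem_of_smul_mem_of_mul_mem m.2 (hp.coprime_iff_not_dvd.mpr hm₂) (hx ▸ x.2) (hc' ▸ c.2)) hx

/-- Lemma A.3 (iii): if `p` is a prime with `p ∣ d`, `(p,p) ∣ m·x` in `𝒪_D`
and `p ∤ N(m)`, then `(p,p) ∣ x` in `𝒪_D`. -/
theorem dvd_of_dvd_mul_of_not_dvd_norm (d : ℤ) (hd : 1 ≤ d) (p : ℤ) (hp : Prime p)
    (hpd : p ∣ d) (m x : Od d) (h : (p : Od d) ∣ m * x)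
    (hN : ¬ p ∣ (m : ℤ × ℤ).1 * (m : ℤ × ℤ).2) :
    (p : Od d) ∣ x :=
  dvd_of_dvd_mul_of_not_dvd_norm_general d p hp m x h hN
end

section
/- A prime ideal 𝔭 of 𝒪_D is a maximal ideal if and only if 𝔭 is regular, i.e., 𝔭 contains an element that is not a zero divisor. -/
/-!
`𝒪_D` is integral over `ℤ`, being a subring of the finite `ℤ`-algebra `ℤ × ℤ`; hence a prime
`P` is maximal iff its contraction `P ∩ ℤ` is a maximal ideal of `ℤ`, i.e. is nonzero. A regular
`z = (a, b) ∈ P` gives the nonzero integer `ab = z · (b, a) ∈ P`, and conversely a nonzero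
integer `n ∈ P` is the regular element `(n, n)`.
-/

theorem Ideal.isMaximal_iff_comap_ne_bot_of_isIntegral {R S : Type*} [CommRing R] [IsDomain R]
    [Ring.DimensionLEOne R] [CommRing S] [Algebra R S] [Algebra.IsIntegral R S]
    (hR : ¬IsField R) (P : Ideal S) [P.IsPrime] :
    P.IsMaximal ↔ P.comap (algebraMap R S) ≠ ⊥ :=
  ⟨fun _ ↦ Ring.ne_bot_of_isMaximal_of_not_isField
      (isMaximal_comap_of_isIntegral_of_isMaximal P) hR,
    fun h ↦ isMaximal_of_isIntegral_of_isMaximal_comap P (IsPrime.isMaximal inferInstance h)⟩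

theorem Prod.intCast_mem_nonZeroDivisors_iff {n : ℤ} :
    (n : ℤ × ℤ) ∈ nonZeroDivisors (ℤ × ℤ) ↔ n ≠ 0 := by
  refine ⟨fun h hn ↦ nonZeroDivisors.ne_zero h (by simp [hn]), fun hn ↦ ?_⟩
  rw [mem_nonZeroDivisors_iff_right]
  intro x hx
  simpa [Prod.ext_iff, hn] using hx

theorem Prod.mul_swap_eq_intCast (z : ℤ × ℤ) : z * z.swap = ((z.1 * z.2 : ℤ) : ℤ × ℤ) := by
  ext <;> simp [mul_comm]

namespace Od

variable {d : ℤ}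

instance : Algebra.IsIntegral ℤ (Od d) :=
  Algebra.IsIntegral.of_injective (Od d).subtype.toIntAlgHom Subtype.val_injective

theorem swap_mem {z : ℤ × ℤ} (hz : z ∈ Od d) : z.swap ∈ Od d := by
  rw [mem_Od] at hz ⊢
  simpa using hz.neg_right

theorem exists_mem_nonZeroDivisors_iff_comap_ne_bot (I : Ideal (Od d)) :
    (∃ z ∈ I, (z : ℤ × ℤ) ∈ nonZeroDivisors (ℤ × ℤ)) ↔ I.comap (algebraMap ℤ (Od d)) ≠ ⊥ := by
  rw [Submodule.ne_bot_iff]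
  constructor
  · rintro ⟨⟨z, hzOd⟩, hzI, hz⟩
    refine ⟨z.1 * z.2, ?_, fun h ↦ nonZeroDivisors.ne_zero hz ?_⟩
    · have : algebraMap ℤ (Od d) (z.1 * z.2) = ⟨z, hzOd⟩ * ⟨z.swap, swap_mem hzOd⟩ :=
        Subtype.ext (z.mul_swap_eq_intCast).symm
      rw [Ideal.mem_comap, this]
      exact I.mul_mem_right _ hzI
    · have : z * z.swap = 0 := by simp [z.mul_swap_eq_intCast, h]
      simpa using congrArg Prod.swap ((mul_left_mem_nonZeroDivisors_eq_zero_iff hz).mp this)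
  · rintro ⟨n, hnI, hn⟩
    exact ⟨_, hnI, by simpa [Prod.intCast_mem_nonZeroDivisors_iff] using hn⟩
end Od

theorem prime_ideal_maximal_iff_regular_general (d : ℤ)
    (P : Ideal (Od d)) (hP : P.IsPrime) :
    P.IsMaximal ↔ ∃ z ∈ P, ((z : ℤ × ℤ)) ∈ nonZeroDivisors (ℤ × ℤ) := by
  rw [Od.exists_mem_nonZeroDivisors_iff_comap_ne_bot,
    Ideal.isMaximal_iff_comap_ne_bot_of_isIntegral Int.not_isField]

/-- Lemma A.4: a prime ideal of `𝒪_D` is maximal iff it is regular,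
i.e. contains an element that is not a zero divisor. -/
theorem prime_ideal_maximal_iff_regular (d : ℤ) (hd : 1 ≤ d)
    (P : Ideal (Od d)) (hP : P.IsPrime) :
    P.IsMaximal ↔ ∃ z ∈ P, ((z : ℤ × ℤ)) ∈ nonZeroDivisors (ℤ × ℤ) :=
  prime_ideal_maximal_iff_regular_general d P hP
end

section
/- Let p ∈ ℤ be a prime number with p ∣ d. Then the principal ideal (p) = (p,p)·𝒪_D is not a prime ideal of 𝒪_D, but it is irreducible: whenever (p) = I ∩ J for ideals I, J of 𝒪_D, one has I = (p) or J = (p). -/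
/-!
Write `w = (0, d)`. Every element of `𝒪_D` is `x + m w` with `x, m ∈ ℤ`, and `w² = d w`; for
`d ≠ 0` it lies in `(q)` exactly when `q ∣ x` and `q ∣ m`. Hence `w (d - w) = 0` exhibits `(p)` as
non-prime. For irreducibility, an ideal `I ⊋ (p)` contains `p w` and some `x + m w ∉ (p)`: if
`p ∣ x` then `m w ∈ I` with `p ∤ m`, otherwise `w (x + m w) = (x + m d) w ∈ I` with `p ∤ x + m d`
(as `p ∣ d`). Either way Bézout gives `w ∈ I`. So every ideal strictly above `(p)` contains
`w ∉ (p)`, and `(p)` cannot be the intersection of two of them.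
-/

theorem infIrred_of_forall_lt_imp_le {α : Type*} [Lattice α] {a c : α} (hc : ¬ c ≤ a)
    (h : ∀ x, a < x → c ≤ x) : InfIrred a := by
  refine ⟨fun hmax => hc (le_sup_right.trans (hmax le_sup_left)), fun b b' hab => ?_⟩
  by_contra! hne
  have hb : a < b := lt_of_le_of_ne (hab ▸ inf_le_left) hne.1.symm
  have hb' : a < b' := lt_of_le_of_ne (hab ▸ inf_le_right) hne.2.symm
  exact hc (hab ▸ le_inf (h b hb) (h b' hb'))

theorem Ideal.mem_of_intCast_mul_mem_of_isCoprime {R : Type*} [CommRing R] {I : Ideal R}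
    {x : R} {a b : ℤ} (hab : IsCoprime a b) (ha : (a : R) * x ∈ I) (hb : (b : R) * x ∈ I) :
    x ∈ I := by
  obtain ⟨u, v, huv⟩ := hab
  have hx : x = (u : R) * ((a : R) * x) + (v : R) * ((b : R) * x) := by
    rw [← mul_assoc, ← mul_assoc, ← add_mul, ← Int.cast_mul, ← Int.cast_mul, ← Int.cast_add,
      huv, Int.cast_one, one_mul]
  rw [hx]
  exact add_mem (I.mul_mem_left _ ha) (I.mul_mem_left _ hb)

namespace Od

variable {d : ℤ}

theorem wd_mul_self : wd d * wd d = (d : Od d) * wd d :=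
  Subtype.ext <| Prod.ext (by simp [wd]) (by simp [wd])

theorem exists_eq_intCast_add_mul_wd (z : Od d) : ∃ x m : ℤ, z = x + m * wd d := by
  obtain ⟨k, hk⟩ := mem_Od.mp z.2
  refine ⟨(z : ℤ × ℤ).1, -k, Subtype.ext <| Prod.ext ?_ ?_⟩
  · simp [wd]
  · simp only [Int.cast_neg, wd, neg_mul, Subring.coe_add, SubringClass.coe_intCast,
      NegMemClass.coe_neg, Subring.coe_mul, Prod.snd_add, Prod.snd_intCast, Int.cast_eq,
      Prod.snd_neg, Prod.snd_mul]
    linear_combination -hk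

theorem intCast_add_mul_wd_mem_span_iff (hd : d ≠ 0) {q x m : ℤ} :
    (x + m * wd d : Od d) ∈ Ideal.span {(q : Od d)} ↔ q ∣ x ∧ q ∣ m := by
  rw [Ideal.mem_span_singleton']
  constructor
  · rintro ⟨c, hc⟩
    obtain ⟨a, b, rfl⟩ := exists_eq_intCast_add_mul_wd c
    have h1 := congrArg (fun z : Od d => (z : ℤ × ℤ).1) hc
    have h2 := congrArg (fun z : Od d => (z : ℤ × ℤ).2) hc
    simp only [wd, Subring.coe_mul, Subring.coe_add, SubringClass.coe_intCast, Prod.fst_mul,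
      Prod.fst_add, Prod.fst_intCast, Int.cast_eq, mul_zero, add_zero, Prod.snd_mul, Prod.snd_add,
      Prod.snd_intCast] at h1 h2
    refine ⟨⟨a, by linarith⟩, ⟨b, mul_right_cancel₀ hd ?_⟩⟩
    linear_combination h1 - h2
  · rintro ⟨⟨a, rfl⟩, ⟨b, rfl⟩⟩
    exact ⟨a + b * wd d, by push_cast; ring⟩

theorem wd_mem_of_span_lt (hd : d ≠ 0) {q : ℤ} (hq : Prime q) (hqd : q ∣ d) {I : Ideal (Od d)}
    (hI : Ideal.span {(q : Od d)} < I) : wd d ∈ I := by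
  obtain ⟨z, hzI, hzq⟩ := SetLike.exists_of_lt hI
  obtain ⟨x, m, rfl⟩ := exists_eq_intCast_add_mul_wd z
  rw [intCast_add_mul_wd_mem_span_iff hd] at hzq
  have hqw : (q : Od d) * wd d ∈ I :=
    hI.le (Ideal.mul_mem_right _ _ (Ideal.mem_span_singleton_self _))
  by_cases hqx : q ∣ x
  · have hx : (x : Od d) ∈ I := hI.le <| Ideal.mem_span_singleton.mpr (Int.cast_dvd_cast _ _ hqx)
    refine Ideal.mem_of_intCast_mul_mem_of_isCoprime
      (hq.coprime_iff_not_dvd.mpr fun hqm => hzq ⟨hqx, hqm⟩) hqw ?_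
    simpa using I.sub_mem hzI hx
  · have hy : ¬ q ∣ x + m * d := fun h => hqx <| by simpa using dvd_sub h (hqd.mul_left m)
    refine Ideal.mem_of_intCast_mul_mem_of_isCoprime (hq.coprime_iff_not_dvd.mpr hy) hqw ?_
    have hwz : ((x + m * d : ℤ) : Od d) * wd d = wd d * (x + m * wd d) := by
      push_cast
      rw [mul_add, mul_left_comm, wd_mul_self]
      ring
    exact hwz ▸ I.mul_mem_left _ hzI

end Od

open Od in
/-- Theorem 2.3/A.10 (ii): for a prime `p ∣ d` the principal ideal `(p)`
of `𝒪_D` is not prime, but it is irreducible: it is not the intersection of two strictly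
larger ideals. -/
theorem span_p_irreducible_not_prime (d : ℤ) (hd : 1 ≤ d) (p : ℕ) (hp : p.Prime)
    (hpd : (p : ℤ) ∣ d) :
    ¬ (Ideal.span {(p : Od d)}).IsPrime ∧
      ∀ I J : Ideal (Od d), Ideal.span {(p : Od d)} = I ⊓ J →
        I = Ideal.span {(p : Od d)} ∨ J = Ideal.span {(p : Od d)} := by
  have hd0 : d ≠ 0 := by omega
  have hpZ : Prime (p : ℤ) := Nat.prime_iff_prime_int.mp hp
  have hpunit : ¬ (p : ℤ) ∣ 1 := hpZ.not_dvd_one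
  rw [show (p : Od d) = ((p : ℤ) : Od d) by norm_cast]
  have hw : wd d ∉ Ideal.span {((p : ℤ) : Od d)} := by
    simpa [hpunit] using intCast_add_mul_wd_mem_span_iff hd0 (q := p) (x := 0) (m := 1)
  refine ⟨fun hP => ?_, fun I J hIJ => ?_⟩
  · have hdw : (d : Od d) - wd d ∉ Ideal.span {((p : ℤ) : Od d)} := by
      simpa [hpunit, sub_eq_add_neg] using
        intCast_add_mul_wd_mem_span_iff hd0 (q := p) (x := d) (m := -1)
    have hzero : wd d * ((d : Od d) - wd d) = 0 := by
      rw [mul_sub, wd_mul_self, mul_comm, sub_self]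
    exact (hP.mem_or_mem (hzero ▸ zero_mem _)).elim hw hdw
  · refine (infIrred_of_forall_lt_imp_le (c := Ideal.span {wd d}) ?_ fun K hK => ?_).2 hIJ.symm
    · rwa [Ideal.span_singleton_le_iff_mem]
    · exact (Ideal.span_singleton_le_iff_mem _).mpr (wd_mem_of_span_lt hd0 hpZ hpd hK)
end

section
/- Let 𝔞 be a regular ideal of 𝒪_D (so N(𝔞) is finite and nonzero) with gcd(N(𝔞), d) = 1. Then 𝔞 can be written as a finite product of prime ideals of 𝒪_D, and this factorization is unique up to reordering of the factors (i.e., the multiset of prime ideal factors is uniquely determined by 𝔞). -/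
/-!
The integer `d` lies in the conductor of `𝒪_D ⊆ ℤ × ℤ`: `d • (ℤ × ℤ) ⊆ 𝒪_D`. For ideals containing an
element coprime to such a conductor element, extension to `ℤ × ℤ` and contraction back are mutually
inverse, multiplicative, and preserve primality. Since `N(𝔞) ∈ 𝔞` and `gcd(N(𝔞), d) = 1`, this moves
the problem to `ℤ × ℤ`, whose ideals are the products `I × J` and whose prime ideals are `𝔭 × ℤ` and
`ℤ × 𝔭`. Regularity of `𝔞` makes `I` and `J` nonzero, so the factorization of `𝔞` comes from the
unique factorizations of `I` and `J` in the Dedekind domain `ℤ`.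
-/

open Ideal UniqueFactorizationMonoid

theorem Ideal.mem_of_isCoprime_of_mul_mem {R : Type*} [CommSemiring R] {I : Ideal R} {a b x : R}
    (hab : IsCoprime a b) (ha : a ∈ I) (hbx : b * x ∈ I) : x ∈ I := by
  obtain ⟨u, v, huv⟩ := hab
  have hx : x = u * (a * x) + v * (b * x) := by
    rw [← mul_assoc, ← mul_assoc, ← add_mul, huv, one_mul]
  rw [hx]
  exact I.add_mem (I.mul_mem_left _ (I.mul_mem_right _ ha)) (I.mul_mem_left _ hbx)

theorem Ideal.natCast_card_quotient_mem {R : Type*} [CommRing R] (A : Ideal R) :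
    (Nat.card (R ⧸ A) : R) ∈ A := by
  rw [← Quotient.eq_zero_iff_mem, map_natCast]
  exact Quotient.index_eq_zero A

theorem Ideal.map_multiset_prod {R S : Type*} [CommSemiring R] [CommSemiring S] (f : R →+* S)
    (t : Multiset (Ideal R)) : t.prod.map f = (t.map (map f)).prod :=
  _root_.map_multiset_prod (mapHom f) t

def Ideal.HasUniquePrimeFactorization {R : Type*} [CommSemiring R] (A : Ideal R) : Prop :=
  ∃ s : Multiset (Ideal R), (∀ P ∈ s, P.IsPrime) ∧ s.prod = A ∧
    ∀ t : Multiset (Ideal R), (∀ P ∈ t, P.IsPrime) → t.prod = A → t = s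

section CoprimeIdeals

variable {R : Type*} [CommSemiring R]

def coprimeIdeals (f : R) : Submonoid (Ideal R) where
  carrier := {A | ∃ n ∈ A, IsCoprime n f}
  mul_mem' := fun ⟨m, hm, hmf⟩ ⟨n, hn, hnf⟩ => ⟨m * n, mul_mem_mul hm hn, hmf.mul_left hnf⟩
  one_mem' := ⟨1, by simp, isCoprime_one_left⟩

theorem mem_coprimeIdeals {f : R} {A : Ideal R} :
    A ∈ coprimeIdeals f ↔ ∃ n ∈ A, IsCoprime n f :=
  Iff.rfl

theorem mem_coprimeIdeals_of_le {f : R} {A B : Ideal R} (hA : A ∈ coprimeIdeals f)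
    (hAB : A ≤ B) : B ∈ coprimeIdeals f :=
  let ⟨n, hn, hnf⟩ := mem_coprimeIdeals.1 hA; ⟨n, hAB hn, hnf⟩

end CoprimeIdeals

section Conductor

variable {S : Type*} [CommRing S] {R : Subring S}

theorem exists_mem_eq_mul_of_mem_map {f : R} (hf : ∀ s : S, (f : S) * s ∈ R) {A : Ideal R}
    {y : S} (hy : y ∈ A.map R.subtype) (s : S) : ∃ a ∈ A, (a : S) = f * s * y := by
  -- The factor `s` makes the property stable under multiplication by `S`, as the induction needs.
  induction hy using Submodule.span_induction generalizing s with
  | mem y hy =>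
    obtain ⟨a, ha, rfl⟩ := hy
    exact ⟨⟨_, hf s⟩ * a, A.mul_mem_left _ ha, rfl⟩
  | zero => exact ⟨0, A.zero_mem, by simp⟩
  | add y z _ _ hy hz =>
    obtain ⟨a, ha, hay⟩ := hy s
    obtain ⟨b, hb, hbz⟩ := hz s
    exact ⟨a + b, A.add_mem ha hb, by rw [Subring.coe_add, hay, hbz, mul_add]⟩
  | smul r y _ hy =>
    obtain ⟨a, ha, hay⟩ := hy (s * r)
    exact ⟨a, ha, by rw [hay, smul_eq_mul]; ring⟩

theorem comap_map_of_mem_coprimeIdeals {f : R} (hf : ∀ s : S, (f : S) * s ∈ R) {A : Ideal R}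
    (hA : A ∈ coprimeIdeals f) : (A.map R.subtype).comap R.subtype = A := by
  refine le_antisymm (fun x hx => ?_) le_comap_map
  obtain ⟨n, hn, hnf⟩ := mem_coprimeIdeals.1 hA
  obtain ⟨a, ha, hax⟩ := exists_mem_eq_mul_of_mem_map hf hx 1
  have hfx : a = f * x := Subtype.ext (by simpa using hax)
  exact mem_of_isCoprime_of_mul_mem hnf hn (hfx ▸ ha)

theorem map_comap_of_comap_mem_coprimeIdeals {f : R} (hf : ∀ s : S, (f : S) * s ∈ R)
    {K : Ideal S} (hK : K.comap R.subtype ∈ coprimeIdeals f) :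
    (K.comap R.subtype).map R.subtype = K := by
  refine le_antisymm map_comap_le (fun y hy => ?_)
  obtain ⟨n, hn, hnf⟩ := mem_coprimeIdeals.1 hK
  have hfy : (⟨_, hf y⟩ : R) ∈ K.comap R.subtype := K.mul_mem_left _ hy
  exact mem_of_isCoprime_of_mul_mem (hnf.map R.subtype) (mem_map_of_mem _ hn)
    (mem_map_of_mem _ hfy)

theorem isPrime_map_of_mem_coprimeIdeals {f : R} (hf : ∀ s : S, (f : S) * s ∈ R)
    {P : Ideal R} (hP : P.IsPrime) (hPf : P ∈ coprimeIdeals f) : (P.map R.subtype).IsPrime := by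
  have hcomap := comap_map_of_mem_coprimeIdeals hf hPf
  obtain ⟨n, hn, hnf⟩ := mem_coprimeIdeals.1 hPf
  refine ⟨fun htop => hP.ne_top (by rw [← hcomap, htop, comap_top]), fun {x y} hxy => ?_⟩
  have hfxfy : (⟨_, hf x⟩ * ⟨_, hf y⟩ : R) ∈ P := by
    rw [← hcomap, mem_comap, Subring.coe_subtype, Subring.coe_mul, mul_mul_mul_comm]
    exact (P.map R.subtype).mul_mem_left _ hxy
  have hmem : ∀ {z : S}, (⟨_, hf z⟩ : R) ∈ P → z ∈ P.map R.subtype := fun hz =>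
    mem_of_isCoprime_of_mul_mem (hnf.map R.subtype) (mem_map_of_mem _ hn) (mem_map_of_mem _ hz)
  exact (hP.mem_or_mem hfxfy).imp hmem hmem

theorem hasUniquePrimeFactorization_of_map {f : R} (hf : ∀ s : S, (f : S) * s ∈ R)
    {A : Ideal R} (hA : A ∈ coprimeIdeals f) (h : (A.map R.subtype).HasUniquePrimeFactorization) :
    A.HasUniquePrimeFactorization := by
  obtain ⟨s, hs_prime, hs_prod, hs_unique⟩ := h
  have hcomap_mem : ∀ K ∈ s, K.comap R.subtype ∈ coprimeIdeals f := fun K hK =>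
    mem_coprimeIdeals_of_le hA <| le_comap_of_map_le <| hs_prod ▸ le_of_dvd (Multiset.dvd_prod hK)
  have hmap_comap : (s.map (comap R.subtype)).map (map R.subtype) = s := by
    rw [Multiset.map_map]
    conv_rhs => rw [← Multiset.map_id s]
    exact Multiset.map_congr rfl fun K hK => map_comap_of_comap_mem_coprimeIdeals hf
      (hcomap_mem K hK)
  refine ⟨s.map (comap R.subtype), ?_, ?_, fun t ht_prime ht_prod => ?_⟩
  · simp only [Multiset.mem_map]
    rintro _ ⟨K, hK, rfl⟩
    exact (hs_prime K hK).comap _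
  · have hprod_mem : (s.map (comap R.subtype)).prod ∈ coprimeIdeals f :=
      Submonoid.multiset_prod_mem _ _ (by simpa using hcomap_mem)
    rw [← comap_map_of_mem_coprimeIdeals hf hprod_mem, ← comap_map_of_mem_coprimeIdeals hf hA,
      Ideal.map_multiset_prod, hmap_comap, hs_prod]
  · have ht_mem : ∀ P ∈ t, P ∈ coprimeIdeals f := fun P hP =>
      mem_coprimeIdeals_of_le hA <| ht_prod ▸ le_of_dvd (Multiset.dvd_prod hP)
    have hmap : t.map (map R.subtype) = s := by
      refine hs_unique _ ?_ (by rw [← Ideal.map_multiset_prod, ht_prod])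
      simp only [Multiset.mem_map]
      rintro _ ⟨P, hP, rfl⟩
      exact isPrime_map_of_mem_coprimeIdeals hf (ht_prime P hP) (ht_mem P hP)
    rw [← hmap, Multiset.map_map]
    conv_lhs => rw [← Multiset.map_id t]
    exact Multiset.map_congr rfl fun P hP => (comap_map_of_mem_coprimeIdeals hf (ht_mem P hP)).symm

end Conductor

section Prod

variable {R₁ R₂ : Type*} [CommRing R₁] [CommRing R₂]

theorem Ideal.prod_mul_prod (I I' : Ideal R₁) (J J' : Ideal R₂) :
    I.prod J * I'.prod J' = (I * I').prod (J * J') := by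
  rw [ideal_prod_eq (I.prod J * I'.prod J'), Ideal.map_mul, Ideal.map_mul]
  simp only [map_fst_prod, map_snd_prod]

theorem Ideal.multiset_prod_map_prod_top (t : Multiset (Ideal R₁)) :
    (t.map (prod · (⊤ : Ideal R₂))).prod = t.prod.prod ⊤ := by
  induction t using Multiset.induction with
  | empty => simp [one_eq_top]
  | cons I t ih => simp [ih, prod_mul_prod]

theorem Ideal.multiset_prod_map_top_prod (t : Multiset (Ideal R₂)) :
    (t.map (prod (⊤ : Ideal R₁))).prod = prod ⊤ t.prod := by
  induction t using Multiset.induction with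
  | empty => simp [one_eq_top]
  | cons I t ih => simp [ih, prod_mul_prod]

theorem Ideal.exists_eq_map_prod_top_add_map_top_prod {t : Multiset (Ideal (R₁ × R₂))}
    (ht : ∀ P ∈ t, P.IsPrime) :
    ∃ (t₁ : Multiset (Ideal R₁)) (t₂ : Multiset (Ideal R₂)), (∀ P ∈ t₁, P.IsPrime) ∧
      (∀ P ∈ t₂, P.IsPrime) ∧ t = t₁.map (prod · ⊤) + t₂.map (prod ⊤) := by
  induction t using Multiset.induction with
  | empty => exact ⟨0, 0, by simp, by simp, by simp⟩
  | cons P t ih =>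
    obtain ⟨t₁, t₂, ht₁, ht₂, rfl⟩ := ih fun Q hQ => ht Q (Multiset.mem_cons_of_mem hQ)
    rcases (ideal_prod_prime P).1 (ht P (Multiset.mem_cons_self _ _)) with
      ⟨p, hp, rfl⟩ | ⟨p, hp, rfl⟩
    · refine ⟨p ::ₘ t₁, t₂, Multiset.forall_mem_cons.2 ⟨hp, ht₁⟩, ht₂, ?_⟩
      rw [Multiset.map_cons, Multiset.cons_add]
    · refine ⟨t₁, p ::ₘ t₂, ht₁, Multiset.forall_mem_cons.2 ⟨hp, ht₂⟩, ?_⟩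
      rw [Multiset.map_cons, Multiset.add_cons]

theorem Ideal.normalizedFactors_multiset_prod_of_isPrime [IsDedekindDomain R₁]
    {t : Multiset (Ideal R₁)} (ht : ∀ P ∈ t, P.IsPrime) (h : t.prod ≠ ⊥) :
    normalizedFactors t.prod = t :=
  normalizedFactors_prod_of_prime fun P hP =>
    prime_of_isPrime (fun hbot => h (Multiset.prod_eq_zero (hbot ▸ hP : ⊥ ∈ t))) (ht P hP)

theorem Ideal.hasUniquePrimeFactorization_prod [IsDedekindDomain R₁] [IsDedekindDomain R₂]
    {I : Ideal R₁} {J : Ideal R₂} (hI : I ≠ ⊥) (hJ : J ≠ ⊥) :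
    (I.prod J).HasUniquePrimeFactorization := by
  refine ⟨(normalizedFactors I).map (prod · ⊤) + (normalizedFactors J).map (prod ⊤), ?_, ?_,
    fun t ht_prime ht_prod => ?_⟩
  · simp only [Multiset.mem_add, Multiset.mem_map]
    rintro _ (⟨P, hP, rfl⟩ | ⟨P, hP, rfl⟩)
    · have := isPrime_of_prime (prime_of_normalized_factor P hP)
      exact isPrime_ideal_prod_top
    · have := isPrime_of_prime (prime_of_normalized_factor P hP)
      exact isPrime_ideal_prod_top'
  · rw [Multiset.prod_add, multiset_prod_map_prod_top, multiset_prod_map_top_prod, prod_mul_prod,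
      prod_normalizedFactors_eq_self hI, prod_normalizedFactors_eq_self hJ, mul_top, top_mul]
  · obtain ⟨t₁, t₂, ht₁, ht₂, rfl⟩ := exists_eq_map_prod_top_add_map_top_prod ht_prime
    rw [Multiset.prod_add, multiset_prod_map_prod_top, multiset_prod_map_top_prod, prod_mul_prod,
      mul_top, top_mul, prod_inj] at ht_prod
    obtain ⟨rfl, rfl⟩ := ht_prod
    rw [normalizedFactors_multiset_prod_of_isPrime ht₁ hI,
      normalizedFactors_multiset_prod_of_isPrime ht₂ hJ]

theorem Ideal.exists_eq_prod_of_mem_nonZeroDivisors [Nontrivial R₁] [Nontrivial R₂]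
    {K : Ideal (R₁ × R₂)} {z : R₁ × R₂} (hzK : z ∈ K)
    (hz : z ∈ nonZeroDivisors (R₁ × R₂)) :
    ∃ (I : Ideal R₁) (J : Ideal R₂), I ≠ ⊥ ∧ J ≠ ⊥ ∧ K = I.prod J := by
  refine ⟨_, _, (Submodule.ne_bot_iff _).2 ⟨z.1, mem_map_of_mem _ hzK, fun h => ?_⟩,
    (Submodule.ne_bot_iff _).2 ⟨z.2, mem_map_of_mem _ hzK, fun h => ?_⟩, ideal_prod_eq K⟩
  · have := (mem_nonZeroDivisors_iff_right.1 hz) (1, 0) (by ext <;> simp [h])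
    simp [Prod.ext_iff] at this
  · have := (mem_nonZeroDivisors_iff_right.1 hz) (0, 1) (by ext <;> simp [h])
    simp [Prod.ext_iff] at this

end Prod

theorem Od.intCast_mul_mem (d : ℤ) (s : ℤ × ℤ) : ((d : Od d) : ℤ × ℤ) * s ∈ Od d := by
  rw [mem_Od]
  simp [← mul_sub]

theorem unique_factorization_of_coprime_ideal_general (d : ℤ) (A : Ideal (Od d))
    (hreg : ∃ z ∈ A, ((z : ℤ × ℤ)) ∈ nonZeroDivisors (ℤ × ℤ))
    (hcop : Int.gcd (Nat.card (Od d ⧸ A) : ℤ) d = 1) :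
    ∃ s : Multiset (Ideal (Od d)), (∀ P ∈ s, P.IsPrime) ∧ s.prod = A ∧
      ∀ t : Multiset (Ideal (Od d)), (∀ P ∈ t, P.IsPrime) → t.prod = A → t = s := by
  have hA : A ∈ coprimeIdeals (d : Od d) := by
    refine ⟨Nat.card (Od d ⧸ A), natCast_card_quotient_mem A, ?_⟩
    simpa using (Int.isCoprime_iff_gcd_eq_one.2 hcop).map (Int.castRingHom (Od d))
  obtain ⟨z, hzA, hz⟩ := hreg
  obtain ⟨I, J, hI, hJ, hIJ⟩ :=
    exists_eq_prod_of_mem_nonZeroDivisors (mem_map_of_mem (Od d).subtype hzA) hz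
  apply hasUniquePrimeFactorization_of_map (Od.intCast_mul_mem d) hA
  rw [hIJ]
  exact hasUniquePrimeFactorization_prod hI hJ

/-- Corollary 2.4/A.11: every regular ideal `𝔞` of `𝒪_D` with
`gcd(N(𝔞), d) = 1` is a product of prime ideals, uniquely up to reordering. -/
theorem unique_factorization_of_coprime_ideal (d : ℤ) (hd : 1 ≤ d) (A : Ideal (Od d))
    (hreg : ∃ z ∈ A, ((z : ℤ × ℤ)) ∈ nonZeroDivisors (ℤ × ℤ))
    (hcop : Int.gcd (Nat.card (Od d ⧸ A) : ℤ) d = 1) :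
    ∃ s : Multiset (Ideal (Od d)), (∀ P ∈ s, P.IsPrime) ∧ s.prod = A ∧
      ∀ t : Multiset (Ideal (Od d)), (∀ P ∈ t, P.IsPrime) → t.prod = A → t = s :=
  unique_factorization_of_coprime_ideal_general d A hreg hcop
end

section
/- If R is a finite commutative ring, then SL₂(R) is generated by elementary matrices, i.e., by the matrices of the form [[1, r],[0, 1]] and [[1, 0],[r, 1]] with r ∈ R. -/
/-- The set of elementary matrices `[[1,r],[0,1]]` and `[[1,0],[r,1]]` in `SL₂(R)`. -/
def elementarySL2 (R : Type*) [CommRing R] :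
    Set (Matrix.SpecialLinearGroup (Fin 2) R) :=
  {A | ∃ r : R, (A : Matrix (Fin 2) (Fin 2) R) = !![1, r; 0, 1] ∨
      (A : Matrix (Fin 2) (Fin 2) R) = !![1, 0; r, 1]}

/-!
A matrix of `SL₂(R)` whose top-left entry is a unit `u` factors as
`[[1,0],[*,1]] · diag(u, u⁻¹) · [[1,*],[0,1]]`, and by Whitehead's lemma `diag(u, u⁻¹)` is a
product of elementary matrices. The first column `(a, c)` of any matrix of `SL₂(R)` is
unimodular. A finite ring has only finitely many maximal ideals, so by the Chinese remainder
theorem some `a + r c` is a unit; multiplying by `[[1,r],[0,1]]` reduces to the unit case.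
-/

open Matrix MatrixGroups

theorem IsCoprime.exists_isUnit_add_mul {R : Type*} [CommRing R] [Finite (MaximalSpectrum R)]
    {a b : R} (h : IsCoprime a b) : ∃ r : R, IsUnit (a + r * b) := by
  classical
  -- `r ≡ 1` modulo the maximal ideals containing `a`, and `r ≡ 0` modulo the others.
  obtain ⟨r, hr⟩ := Ideal.pi_quotient_surjective
    (fun _ _ hne => MaximalSpectrum.isCoprime_of_ne hne)
    (fun m : MaximalSpectrum R => if a ∈ m.asIdeal then 1 else 0)
  refine ⟨r, by_contra fun hu => ?_⟩
  obtain ⟨m, hm, hmem⟩ := exists_max_ideal_of_mem_nonunits hu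
  have hrm : Ideal.Quotient.mk m r = if a ∈ m then 1 else 0 := hr ⟨m, hm⟩
  rw [← Ideal.Quotient.eq_zero_iff_mem, map_add, map_mul, hrm] at hmem
  by_cases ha : a ∈ m
  · have hb : b ∉ m := fun hb => by
      obtain ⟨x, y, hxy⟩ := h
      exact hm.ne_top <| m.eq_top_iff_one.2 <|
        hxy ▸ m.add_mem (m.mul_mem_left x ha) (m.mul_mem_left y hb)
    rw [if_pos ha, Ideal.Quotient.eq_zero_iff_mem.2 ha, zero_add, one_mul,
      Ideal.Quotient.eq_zero_iff_mem] at hmem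
    exact hb hmem
  · rw [if_neg ha, zero_mul, add_zero, Ideal.Quotient.eq_zero_iff_mem] at hmem
    exact ha hmem

namespace Matrix.SpecialLinearGroup

variable {R : Type*} [CommRing R]

def upperElementary (r : R) : SL(2, R) := ⟨!![1, r; 0, 1], by simp⟩

def lowerElementary (r : R) : SL(2, R) := ⟨!![1, 0; r, 1], by simp⟩

def diagonalUnit (u : Rˣ) : SL(2, R) := ⟨!![(u : R), 0; 0, ↑u⁻¹], by simp⟩

@[simp]
theorem coe_upperElementary (r : R) :
    (upperElementary r : Matrix (Fin 2) (Fin 2) R) = !![1, r; 0, 1] := rfl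

@[simp]
theorem coe_lowerElementary (r : R) :
    (lowerElementary r : Matrix (Fin 2) (Fin 2) R) = !![1, 0; r, 1] := rfl

@[simp]
theorem coe_diagonalUnit (u : Rˣ) :
    (diagonalUnit u : Matrix (Fin 2) (Fin 2) R) = !![(u : R), 0; 0, ↑u⁻¹] := rfl

theorem upperElementary_mem_closure (r : R) :
    upperElementary r ∈ Subgroup.closure (elementarySL2 R) :=
  Subgroup.subset_closure ⟨r, .inl rfl⟩

theorem lowerElementary_mem_closure (r : R) :
    lowerElementary r ∈ Subgroup.closure (elementarySL2 R) :=
  Subgroup.subset_closure ⟨r, .inr rfl⟩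

theorem diagonalUnit_eq (u : Rˣ) :
    diagonalUnit u =
      upperElementary (u : R) * lowerElementary (-↑u⁻¹ : R) * upperElementary (u : R) *
        (upperElementary (-1) * lowerElementary 1 * upperElementary (-1)) := by
  ext i j
  fin_cases i <;> fin_cases j <;> simp [coe_mul, mul_apply, Fin.sum_univ_two]

theorem diagonalUnit_mem_closure (u : Rˣ) :
    diagonalUnit u ∈ Subgroup.closure (elementarySL2 R) := by
  rw [diagonalUnit_eq]
  refine mul_mem (mul_mem (mul_mem ?_ ?_) ?_) (mul_mem (mul_mem ?_ ?_) ?_) <;>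
    first | exact upperElementary_mem_closure _ | exact lowerElementary_mem_closure _

theorem eq_lowerElementary_mul_diagonalUnit_mul_upperElementary (A : SL(2, R)) (u : Rˣ)
    (hu : A 0 0 = u) :
    A = lowerElementary (A 1 0 * ↑u⁻¹) * diagonalUnit u * upperElementary (↑u⁻¹ * A 0 1) := by
  have hdet : A 0 0 * A 1 1 - A 0 1 * A 1 0 = 1 := by rw [← det_fin_two, det_coe]
  ext i j
  fin_cases i <;> fin_cases j <;> simp [coe_mul, mul_apply, Fin.sum_univ_two]
  · exact hu
  · linear_combination (↑u⁻¹ : R) * hdet - (↑u⁻¹ : R) * A 1 1 * hu - A 1 1 * u.inv_mul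

theorem mem_closure_elementarySL2_of_isUnit {A : SL(2, R)} (h : IsUnit (A 0 0)) :
    A ∈ Subgroup.closure (elementarySL2 R) := by
  obtain ⟨u, hu⟩ := h
  rw [eq_lowerElementary_mul_diagonalUnit_mul_upperElementary A u hu.symm]
  exact mul_mem (mul_mem (lowerElementary_mem_closure _) (diagonalUnit_mem_closure u))
    (upperElementary_mem_closure _)

theorem closure_elementarySL2_eq_top
    (h : ∀ a b : R, IsCoprime a b → ∃ r : R, IsUnit (a + r * b)) :
    Subgroup.closure (elementarySL2 R) = ⊤ := by
  refine (Subgroup.eq_top_iff' _).2 fun A => ?_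
  obtain ⟨r, hr⟩ := h _ _ (isCoprime_col A 0)
  have hrA : IsUnit ((upperElementary r * A) 0 0) := by
    simpa [coe_mul, mul_apply, Fin.sum_univ_two] using hr
  exact (Subgroup.mul_mem_cancel_left _ (upperElementary_mem_closure r)).1
    (mem_closure_elementarySL2_of_isUnit hrA)

end Matrix.SpecialLinearGroup

/-- Lemma A.13: for a finite commutative ring `R`, the group `SL₂(R)`
is generated by elementary matrices. -/
theorem sl2_generated_by_elementary_of_finite (R : Type*) [CommRing R] [Finite R] :
    Subgroup.closure (elementarySL2 R) = ⊤ :=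
  Matrix.SpecialLinearGroup.closure_elementarySL2_eq_top fun _ _ h => h.exists_isUnit_add_mul
end

section
/- Let 𝔞 be a regular ideal of 𝒪_D (hence of finite norm). Then the index of Γ₁^D(𝔞) in Γ₀^D(𝔞) equals φ^D(𝔞), the number of units of the quotient ring 𝒪_D/𝔞. -/
open Matrix

variable (R : Type*) [CommRing R]

/-- The Hecke congruence subgroup `Γ₀(𝔞)` of `SL₂(R)`: matrices whose lower-left entry
lies in the ideal `𝔞`. -/
def GammaZero (A : Ideal R) : Subgroup (Matrix.SpecialLinearGroup (Fin 2) R) where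
  carrier := {M | M.1 1 0 ∈ A}
  one_mem' := by
    show (1 : Matrix.SpecialLinearGroup (Fin 2) R).1 1 0 ∈ A
    simp
  mul_mem' := by
    rintro M N hM hN
    show (M * N).1 1 0 ∈ A
    have e : (M * N).1 1 0 = M.1 1 0 * N.1 0 0 + M.1 1 1 * N.1 1 0 := by
      simp [Matrix.SpecialLinearGroup.coe_mul, Matrix.mul_apply, Fin.sum_univ_two]
    rw [e]
    exact A.add_mem (A.mul_mem_right _ hM) (A.mul_mem_left _ hN)
  inv_mem' := by
    rintro M hM
    show (M⁻¹).1 1 0 ∈ A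
    rw [Matrix.SpecialLinearGroup.SL2_inv_expl M]
    simpa using A.neg_mem hM

/-- The congruence subgroup `Γ₁(𝔞)` of `SL₂(R)`: matrices whose lower-left entry and
whose diagonal entries minus `1` lie in the ideal `𝔞`. -/
def GammaOne (A : Ideal R) : Subgroup (Matrix.SpecialLinearGroup (Fin 2) R) where
  carrier := {M | M.1 1 0 ∈ A ∧ M.1 0 0 - 1 ∈ A ∧ M.1 1 1 - 1 ∈ A}
  one_mem' := by
    refine ⟨?_, ?_, ?_⟩ <;>
      · show _ ∈ A
        simp
  mul_mem' := by
    rintro M N ⟨hM0, hM1, hM2⟩ ⟨hN0, hN1, hN2⟩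
    have e : ∀ i j, (M * N).1 i j = M.1 i 0 * N.1 0 j + M.1 i 1 * N.1 1 j := by
      intro i j
      simp [Matrix.SpecialLinearGroup.coe_mul, Matrix.mul_apply, Fin.sum_univ_two]
    refine ⟨?_, ?_, ?_⟩
    · show (M * N).1 1 0 ∈ A
      rw [e]
      exact A.add_mem (A.mul_mem_right _ hM0) (A.mul_mem_left _ hN0)
    · show (M * N).1 0 0 - 1 ∈ A
      rw [e]
      have h : M.1 0 0 * N.1 0 0 + M.1 0 1 * N.1 1 0 - 1
          = (M.1 0 0 - 1) * N.1 0 0 + (N.1 0 0 - 1) + M.1 0 1 * N.1 1 0 := by ring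
      rw [h]
      exact A.add_mem (A.add_mem (A.mul_mem_right _ hM1) hN1) (A.mul_mem_left _ hN0)
    · show (M * N).1 1 1 - 1 ∈ A
      rw [e]
      have h : M.1 1 0 * N.1 0 1 + M.1 1 1 * N.1 1 1 - 1
          = (M.1 1 1 - 1) * N.1 1 1 + (N.1 1 1 - 1) + M.1 1 0 * N.1 0 1 := by ring
      rw [h]
      exact A.add_mem (A.add_mem (A.mul_mem_right _ hM2) hN2) (A.mul_mem_right _ hM0)
  inv_mem' := by
    rintro M ⟨hM0, hM1, hM2⟩
    rw [Set.mem_setOf_eq, Matrix.SpecialLinearGroup.SL2_inv_expl M]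
    refine ⟨?_, ?_, ?_⟩
    · simpa using A.neg_mem hM0
    · simpa using hM2
    · simpa using hM1

/-- The principal congruence subgroup `Γ(𝔞)` of `SL₂(R)`: matrices congruent to the
identity matrix modulo the ideal `𝔞` (all entries of `M - 1` lie in `𝔞`). -/
def GammaFull (A : Ideal R) : Subgroup (Matrix.SpecialLinearGroup (Fin 2) R) where
  carrier := {M | M.1 0 0 - 1 ∈ A ∧ M.1 0 1 ∈ A ∧ M.1 1 0 ∈ A ∧ M.1 1 1 - 1 ∈ A}
  one_mem' := by
    refine ⟨?_, ?_, ?_, ?_⟩ <;>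
      · show _ ∈ A
        simp
  mul_mem' := by
    rintro M N ⟨hM1, hM2, hM3, hM4⟩ ⟨hN1, hN2, hN3, hN4⟩
    have e : ∀ i j, (M * N).1 i j = M.1 i 0 * N.1 0 j + M.1 i 1 * N.1 1 j := by
      intro i j
      simp [Matrix.SpecialLinearGroup.coe_mul, Matrix.mul_apply, Fin.sum_univ_two]
    refine ⟨?_, ?_, ?_, ?_⟩
    · show (M * N).1 0 0 - 1 ∈ A
      rw [e]
      have h : M.1 0 0 * N.1 0 0 + M.1 0 1 * N.1 1 0 - 1
          = (M.1 0 0 - 1) * N.1 0 0 + (N.1 0 0 - 1) + M.1 0 1 * N.1 1 0 := by ring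
      rw [h]
      exact A.add_mem (A.add_mem (A.mul_mem_right _ hM1) hN1) (A.mul_mem_left _ hN3)
    · show (M * N).1 0 1 ∈ A
      rw [e]
      exact A.add_mem (A.mul_mem_left _ hN2) (A.mul_mem_right _ hM2)
    · show (M * N).1 1 0 ∈ A
      rw [e]
      exact A.add_mem (A.mul_mem_right _ hM3) (A.mul_mem_left _ hN3)
    · show (M * N).1 1 1 - 1 ∈ A
      rw [e]
      have h : M.1 1 0 * N.1 0 1 + M.1 1 1 * N.1 1 1 - 1
          = (M.1 1 1 - 1) * N.1 1 1 + (N.1 1 1 - 1) + M.1 1 0 * N.1 0 1 := by ring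
      rw [h]
      exact A.add_mem (A.add_mem (A.mul_mem_right _ hM4) hN4) (A.mul_mem_right _ hM3)
  inv_mem' := by
    rintro M ⟨hM1, hM2, hM3, hM4⟩
    rw [Set.mem_setOf_eq, Matrix.SpecialLinearGroup.SL2_inv_expl M]
    refine ⟨?_, ?_, ?_, ?_⟩
    · simpa using hM4
    · simpa using A.neg_mem hM2
    · simpa using A.neg_mem hM3
    · simpa using hM1

/-!
Reducing the lower-right entry modulo `𝔞` is a homomorphism `Γ₀(𝔞) → (R/𝔞)ˣ`: for an element of
`Γ₀(𝔞)` the determinant condition reads `a * d ≡ 1 (mod 𝔞)`, and the lower-right entry of a product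
of two such matrices is congruent to the product of their lower-right entries. Its kernel is
`Γ₁(𝔞)`, since `d ≡ 1` forces `a ≡ 1`, and it is surjective, since a unit `x` with inverse `y`
lifts to `!![y, 1; x * y - 1, x]`.
-/

section

variable {R} {A : Ideal R}

lemma mem_GammaZero {M : SpecialLinearGroup (Fin 2) R} : M ∈ GammaZero R A ↔ M 1 0 ∈ A :=
  Iff.rfl

lemma mem_GammaOne {M : SpecialLinearGroup (Fin 2) R} :
    M ∈ GammaOne R A ↔ M 1 0 ∈ A ∧ M 0 0 - 1 ∈ A ∧ M 1 1 - 1 ∈ A :=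
  Iff.rfl

lemma mk_mul_mk_eq_one_of_mem_GammaZero {M : SpecialLinearGroup (Fin 2) R}
    (hM : M ∈ GammaZero R A) : Ideal.Quotient.mk A (M 1 1) * Ideal.Quotient.mk A (M 0 0) = 1 := by
  have hdet : M 0 0 * M 1 1 - M 0 1 * M 1 0 = 1 := by
    rw [← det_fin_two]; exact M.2
  rw [← map_mul, ← map_one (Ideal.Quotient.mk A), Ideal.Quotient.eq]
  convert A.mul_mem_left (M 0 1) hM using 1
  linear_combination hdet

lemma mk_mul_apply_one_one_of_mem_GammaZero {M : SpecialLinearGroup (Fin 2) R}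
    (hM : M ∈ GammaZero R A) (N : SpecialLinearGroup (Fin 2) R) :
    Ideal.Quotient.mk A ((M * N) 1 1) =
      Ideal.Quotient.mk A (M 1 1) * Ideal.Quotient.mk A (N 1 1) := by
  rw [← map_mul, Ideal.Quotient.eq]
  convert A.mul_mem_right (N 0 1) hM using 1
  simp [mul_apply, Fin.sum_univ_two]

variable (A) in
def GammaZero.lowerRightUnit : GammaZero R A →* (R ⧸ A)ˣ where
  toFun M := Units.mkOfMulEqOne _ _ (mk_mul_mk_eq_one_of_mem_GammaZero M.2)
  map_one' := Units.ext (by simp [Units.val_mkOfMulEqOne])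
  map_mul' M N := Units.ext (mk_mul_apply_one_one_of_mem_GammaZero M.2 N)

lemma GammaZero.ker_lowerRightUnit :
    (GammaZero.lowerRightUnit A).ker = (GammaOne R A).subgroupOf (GammaZero R A) := by
  ext ⟨M, hM⟩
  have hunit := mk_mul_mk_eq_one_of_mem_GammaZero hM
  simp only [MonoidHom.mem_ker, Subgroup.mem_subgroupOf, mem_GammaOne, Units.ext_iff,
    GammaZero.lowerRightUnit, MonoidHom.coe_mk, OneHom.coe_mk, Units.val_mkOfMulEqOne,
    Units.val_one, ← Ideal.Quotient.eq, map_one]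
  refine ⟨fun h ↦ ⟨hM, by simpa [h] using hunit, h⟩, fun h ↦ h.2.2⟩

lemma GammaZero.lowerRightUnit_surjective :
    Function.Surjective (GammaZero.lowerRightUnit A) := by
  intro u
  obtain ⟨x, hx⟩ := Ideal.Quotient.mk_surjective (u : R ⧸ A)
  obtain ⟨y, hy⟩ := Ideal.Quotient.mk_surjective (↑u⁻¹ : R ⧸ A)
  have hxy : x * y - 1 ∈ A := by
    rw [← Ideal.Quotient.eq, map_mul, map_one, hx, hy, Units.mul_inv]
  have hdet : (!![y, 1; x * y - 1, x] : Matrix (Fin 2) (Fin 2) R).det = 1 := by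
    rw [det_fin_two_of]; ring
  exact ⟨⟨⟨!![y, 1; x * y - 1, x], hdet⟩, mem_GammaZero.mpr (by simpa using hxy)⟩,
    Units.ext (by simpa [GammaZero.lowerRightUnit, Units.val_mkOfMulEqOne] using hx)⟩

lemma GammaOne.relIndex_GammaZero (A : Ideal R) :
    (GammaOne R A).relIndex (GammaZero R A) = Nat.card (R ⧸ A)ˣ := by
  rw [Subgroup.relIndex, ← GammaZero.ker_lowerRightUnit, Subgroup.index_ker,
    MonoidHom.range_eq_top.mpr GammaZero.lowerRightUnit_surjective, Subgroup.card_top]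

end

theorem index_gamma_one_in_gamma_zero_general (d : ℤ) (A : Ideal (Od d)) :
    (GammaOne (Od d) A).relIndex (GammaZero (Od d) A) = Nat.card ((Od d ⧸ A)ˣ) :=
  GammaOne.relIndex_GammaZero A

/-- Lemma 2.6 (ii) analogue: for a regular ideal `𝔞` of `𝒪_D`, the index
of `Γ₁^D(𝔞)` in `Γ₀^D(𝔞)` equals `φ^D(𝔞)`, the number of units of `𝒪_D/𝔞`. -/
theorem index_gamma_one_in_gamma_zero (d : ℤ) (hd : 1 ≤ d) (A : Ideal (Od d))
    (hreg : ∃ z ∈ A, ((z : ℤ × ℤ)) ∈ nonZeroDivisors (ℤ × ℤ)) :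
    (GammaOne (Od d) A).relIndex (GammaZero (Od d) A) = Nat.card ((Od d ⧸ A)ˣ) :=
  index_gamma_one_in_gamma_zero_general d A
end

section
/- Let 𝔞 be a regular ideal of 𝒪_D of finite norm. Then the number of units of 𝒪_D/𝔞 satisfies φ^D(𝔞) = N(𝔞) · ∏_{𝔭 ⊇ 𝔞} (1 − 1/N(𝔭)), where the product runs over all prime ideals 𝔭 of 𝒪_D containing 𝔞 (each such 𝔭 has prime norm N(𝔭)), the equality being of rational numbers. -/
/-! A finite commutative ring `R` with nilradical `N` is the disjoint union of `|R/N|` cosets of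
`N`, and an element is a unit iff its image in `R/N` is one (units lift over a nil ideal). Since
`R/N ≅ ∏ R/𝔭` is a product of finite fields over the (all maximal) primes `𝔭`, this gives
`|Rˣ| = |R| ∏ (1 - 1/|R/𝔭|)`. A regular ideal `𝔞 ∋ (a, b)` of `𝒪_D` contains `(abd, 0)` and
`(0, abd)`, so `𝒪_D/𝔞` is finite, and its primes are the primes of `𝒪_D` containing `𝔞`,
with the same residue rings. -/

theorem Ideal.card_eq_card_quotient_mul_card {R : Type*} [CommRing R] (I : Ideal R) :
    Nat.card R = Nat.card (R ⧸ I) * Nat.card I :=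
  AddSubgroup.card_eq_card_quotient_mul_card_addSubgroup I.toAddSubgroup

theorem isUnit_of_isUnit_mk_of_le_nilradical {R : Type*} [CommRing R] {I : Ideal R}
    (hI : I ≤ nilradical R) {x : R} (hx : IsUnit (Ideal.Quotient.mk I x)) : IsUnit x := by
  obtain ⟨y, hy⟩ := hx.exists_right_inv
  obtain ⟨y, rfl⟩ := Ideal.Quotient.mk_surjective y
  have hnil : IsNilpotent (x * y - 1) :=
    hI (Ideal.Quotient.eq.mp (by rwa [map_mul, map_one]))
  have : IsUnit (x * y) := by simpa using hnil.isUnit_one_add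
  exact isUnit_of_mul_isUnit_left this

theorem card_units_eq_card_units_quotient_mul_card {R : Type*} [CommRing R] {I : Ideal R}
    (hI : I ≤ nilradical R) : Nat.card Rˣ = Nat.card (R ⧸ I)ˣ * Nat.card I := by
  let φ : Rˣ →* (R ⧸ I)ˣ := Units.map (Ideal.Quotient.mk I : R →* R ⧸ I)
  have hφ : Function.Surjective φ := by
    intro v
    obtain ⟨x, hx⟩ := Ideal.Quotient.mk_surjective (v : R ⧸ I)
    exact ⟨(isUnit_of_isUnit_mk_of_le_nilradical hI (hx ▸ v.isUnit)).unit, Units.ext hx⟩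
  have mem_ker : ∀ u : Rˣ, u ∈ φ.ker ↔ (u : R) - 1 ∈ I := fun u => by
    rw [MonoidHom.mem_ker, Units.ext_iff, ← Ideal.Quotient.eq]
    rfl
  let e : φ.ker ≃ I :=
    { toFun u := ⟨(u : Rˣ) - 1, (mem_ker _).mp u.2⟩
      invFun x := ⟨(mem_nilradical.mp (hI x.2)).isUnit_one_add.unit, by rw [mem_ker]; simp⟩
      left_inv u := by ext; simp
      right_inv x := by ext; simp }
  rw [φ.ker.card_eq_card_quotient_mul_card_subgroup, Nat.card_congr e,
    Nat.card_congr (QuotientGroup.quotientKerEquivOfSurjective φ hφ).toEquiv]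

theorem card_units_pi_eq_card_mul_prod {ι : Type*} [Fintype ι] (K : ι → Type*)
    [∀ i, GroupWithZero (K i)] [∀ i, Finite (K i)] :
    (Nat.card (Π i, K i)ˣ : ℚ) = Nat.card (Π i, K i) * ∏ i, (1 - 1 / (Nat.card (K i) : ℚ)) := by
  rw [Nat.card_congr MulEquiv.piUnits.toEquiv, Nat.card_pi, Nat.card_pi]
  push_cast
  rw [← Finset.prod_mul_distrib]
  refine Finset.prod_congr rfl fun i _ => ?_
  have h1 : 1 ≤ Nat.card (K i) := Finite.card_pos
  rw [Nat.card_units, Nat.cast_sub h1, mul_one_sub, mul_one_div_cancel (by positivity)]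
  simp

attribute [local instance] IsArtinianRing.fieldOfSubtypeIsMaximal in
theorem IsArtinianRing.card_units_quotient_nilradical (R : Type*) [CommRing R] [IsArtinianRing R]
    [Finite R] :
    (Nat.card (R ⧸ nilradical R)ˣ : ℚ) = Nat.card (R ⧸ nilradical R) *
      ∏ᶠ I : MaximalSpectrum R, (1 - 1 / (Nat.card (R ⧸ I.asIdeal) : ℚ)) := by
  have := Fintype.ofFinite (MaximalSpectrum R)
  let e := (quotNilradicalEquivPi R).toRingEquiv
  rw [Nat.card_congr (Units.mapEquiv e.toMulEquiv).toEquiv, Nat.card_congr e.toEquiv,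
    finprod_eq_prod_of_fintype]
  have (I : MaximalSpectrum R) : Finite (R ⧸ I.asIdeal) :=
    .of_surjective _ Ideal.Quotient.mk_surjective
  exact card_units_pi_eq_card_mul_prod _

theorem finprod_isPrime_eq_finprod_maximalSpectrum {R : Type*} [CommRing R] [IsArtinianRing R]
    {M : Type*} [CommMonoid M] (f : Ideal R → M) :
    ∏ᶠ P ∈ {P : Ideal R | P.IsPrime}, f P = ∏ᶠ I : MaximalSpectrum R, f I.asIdeal := by
  rw [← finprod_mem_range fun _ _ => MaximalSpectrum.ext, MaximalSpectrum.range_asIdeal]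
  simp_rw [IsArtinianRing.isPrime_iff_isMaximal]

theorem card_units_eq_card_mul_finprod (R : Type*) [CommRing R] [Finite R] :
    (Nat.card Rˣ : ℚ) = Nat.card R *
      ∏ᶠ P ∈ {P : Ideal R | P.IsPrime}, (1 - 1 / (Nat.card (R ⧸ P) : ℚ)) := by
  rw [card_units_eq_card_units_quotient_mul_card le_rfl,
    (nilradical R).card_eq_card_quotient_mul_card, finprod_isPrime_eq_finprod_maximalSpectrum]
  push_cast
  rw [IsArtinianRing.card_units_quotient_nilradical]
  ring

theorem finprod_isPrime_eq_of_surjective {R S : Type*} [CommRing R] [CommRing S] {φ : R →+* S}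
    (hφ : Function.Surjective φ) {M : Type*} [CommMonoid M] (g : ℕ → M) :
    ∏ᶠ Q ∈ {Q : Ideal S | Q.IsPrime}, g (Nat.card (S ⧸ Q)) =
      ∏ᶠ P ∈ {P : Ideal R | P.IsPrime ∧ RingHom.ker φ ≤ P}, g (Nat.card (R ⧸ P)) := by
  refine finprod_mem_eq_of_bijOn (Ideal.comap φ) ⟨?_, ?_, ?_⟩ fun Q _ => ?_
  · intro Q (hQ : Q.IsPrime)
    exact ⟨Ideal.comap_isPrime φ Q, Ideal.comap_mono bot_le⟩
  · exact (Ideal.comap_injective_of_surjective φ hφ).injOn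
  · rintro P ⟨hP, hker⟩
    refine ⟨P.map φ, Ideal.map_isPrime_of_surjective hφ hker, ?_⟩
    rw [Ideal.comap_map_of_surjective' φ hφ, sup_eq_left.mpr hker]
  · have hsurj : Function.Surjective ((Ideal.Quotient.mk Q).comp φ) :=
      Ideal.Quotient.mk_surjective.comp hφ
    rw [← Nat.card_congr (RingHom.quotientKerEquivOfSurjective hsurj).toEquiv,
      ← RingHom.comap_ker, Ideal.mk_ker]

theorem card_units_quotient_eq_card_mul_finprod {R : Type*} [CommRing R] (A : Ideal R)
    [Finite (R ⧸ A)] :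
    (Nat.card (R ⧸ A)ˣ : ℚ) = Nat.card (R ⧸ A) *
      ∏ᶠ P ∈ {P : Ideal R | P.IsPrime ∧ A ≤ P}, (1 - 1 / (Nat.card (R ⧸ P) : ℚ)) := by
  rw [card_units_eq_card_mul_finprod,
    finprod_isPrime_eq_of_surjective Ideal.Quotient.mk_surjective fun n : ℕ => 1 - 1 / (n : ℚ),
    Ideal.mk_ker]

theorem Prod.fst_mem_nonZeroDivisors {M₀ N₀ : Type*} [MonoidWithZero M₀] [MonoidWithZero N₀]
    {x : M₀ × N₀} (hx : x ∈ nonZeroDivisors (M₀ × N₀)) : x.1 ∈ nonZeroDivisors M₀ := by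
  refine ⟨fun y hy => ?_, fun y hy => ?_⟩
  · simpa using congrArg Prod.fst (hx.1 (y, 0) (Prod.ext hy (mul_zero _)))
  · simpa using congrArg Prod.fst (hx.2 (y, 0) (Prod.ext hy (zero_mul _)))

theorem Prod.snd_mem_nonZeroDivisors {M₀ N₀ : Type*} [MonoidWithZero M₀] [MonoidWithZero N₀]
    {x : M₀ × N₀} (hx : x ∈ nonZeroDivisors (M₀ × N₀)) : x.2 ∈ nonZeroDivisors N₀ := by
  refine ⟨fun y hy => ?_, fun y hy => ?_⟩
  · simpa using congrArg Prod.snd (hx.1 (0, y) (Prod.ext (mul_zero _) hy))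
  · simpa using congrArg Prod.snd (hx.2 (0, y) (Prod.ext (zero_mul _) hy))

theorem Subring.finite_quotient_of_exists_mem {S : Subring (ℤ × ℤ)} (A : Ideal S) {n : ℤ}
    (hn : n ≠ 0) (h₁ : ∃ x ∈ A, (x : ℤ × ℤ) = (n, 0)) (h₂ : ∃ y ∈ A, (y : ℤ × ℤ) = (0, n)) :
    Finite (S ⧸ A) := by
  obtain ⟨x, hxA, hx⟩ := h₁
  obtain ⟨y, hyA, hy⟩ := h₂
  have : NeZero n.natAbs := ⟨Int.natAbs_ne_zero.mpr hn⟩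
  let f : S →+* ZMod n.natAbs × ZMod n.natAbs :=
    ((Int.castRingHom _).prodMap (Int.castRingHom _)).comp S.subtype
  have hker : RingHom.ker f ≤ A := by
    intro z hz
    have hdvd (i : ℤ) (hi : (i : ZMod n.natAbs) = 0) : n ∣ i :=
      Int.natAbs_dvd.mp ((ZMod.intCast_zmod_eq_zero_iff_dvd _ _).mp hi)
    obtain ⟨u, hu⟩ : n ∣ (z : ℤ × ℤ).1 := hdvd _ (congrArg Prod.fst hz)
    obtain ⟨v, hv⟩ : n ∣ (z : ℤ × ℤ).2 := hdvd _ (congrArg Prod.snd hz)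
    have hz : z = x * u + y * v := by
      ext <;> simp [hx, hy, hu, hv]
    rw [hz]
    exact A.add_mem (A.mul_mem_right _ hxA) (A.mul_mem_right _ hyA)
  have : Finite (S ⧸ RingHom.ker f) := .of_injective _ (RingHom.kerLift_injective f)
  exact .of_surjective _ (Ideal.Quotient.factor_surjective hker)

theorem Od.finite_quotient_of_mem_nonZeroDivisors {d : ℤ} (hd : d ≠ 0) {A : Ideal (Od d)}
    {z : Od d} (hzA : z ∈ A) (hz : (z : ℤ × ℤ) ∈ nonZeroDivisors (ℤ × ℤ)) :
    Finite (Od d ⧸ A) := by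
  have ha := nonZeroDivisors.ne_zero (Prod.fst_mem_nonZeroDivisors hz)
  have hb := nonZeroDivisors.ne_zero (Prod.snd_mem_nonZeroDivisors hz)
  set a := (z : ℤ × ℤ).1
  set b := (z : ℤ × ℤ).2
  refine Subring.finite_quotient_of_exists_mem A (n := a * b * d) (by positivity) ?_ ?_
  · refine ⟨z * ⟨(b * d, 0), mem_Od.mpr ⟨b, by ring⟩⟩, A.mul_mem_right _ hzA, ?_⟩
    ext <;> simp [a, b]
    ring
  · refine ⟨z * ⟨(0, a * d), mem_Od.mpr ⟨-a, by ring⟩⟩, A.mul_mem_right _ hzA, ?_⟩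
    ext <;> simp [a, b]
    ring

/-- Lemma 2.7, first formula: for a regular ideal `𝔞` of `𝒪_D` of finite
norm, the number of units of `𝒪_D/𝔞` is `φ^D(𝔞) = N(𝔞) · ∏_{𝔭 ⊇ 𝔞 prime} (1 − 1/N(𝔭))`,
as rational numbers. -/
theorem totient_formula (d : ℤ) (hd : 1 ≤ d) (A : Ideal (Od d))
    (hreg : ∃ z ∈ A, ((z : ℤ × ℤ)) ∈ nonZeroDivisors (ℤ × ℤ)) :
    (Nat.card ((Od d ⧸ A)ˣ) : ℚ) =
      (Nat.card (Od d ⧸ A) : ℚ) *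
        ∏ᶠ P ∈ {P : Ideal (Od d) | P.IsPrime ∧ A ≤ P},
          (1 - 1 / (Nat.card (Od d ⧸ P) : ℚ)) := by
  obtain ⟨z, hzA, hz⟩ := hreg
  have := Od.finite_quotient_of_mem_nonZeroDivisors (by omega) hzA hz
  exact card_units_quotient_eq_card_mul_finprod A
end

section
/- Let p be a prime number and let H be a subgroup of GL₂(𝔽_p). Let H⁺ be the subgroup of H generated by the set X = {x ∈ H : x^p = 1}. Then the order of H⁺ is either 1, or p, or p³ − p. -/
/-!
If `x ^ p = 1` then `N = x - 1` satisfies `N ^ p = 0` in characteristic `p`, hence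
`N * N = 0`, and `x` generates the one-parameter subgroup `c ↦ 1 + c • N` of `GL₂(𝔽_p)`,
of order `p` (or `1`). If all unipotent elements of `H` lie in a single such subgroup, `|H⁺|`
divides `p`. Otherwise `H` contains unipotents `1 + N`, `1 + M` with `M` not a multiple of
`N`, and one conjugation brings `N` and `M` to multiples of the elementary nilpotents `E₀₁`
and `E₁₀`. Then `H⁺` contains a conjugate of every elementary transvection, and these
generate `SL₂(𝔽_p)`. As unipotent elements have determinant `1`, `H⁺ = SL₂(𝔽_p)`, of order
`p³ - p`.
-/

open Matrix

theorem Matrix.pow_card_eq_zero_of_isNilpotent {R n : Type*} [CommRing R] [IsDomain R]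
    [Fintype n] [DecidableEq n] {M : Matrix n n R} (hM : IsNilpotent M) :
    M ^ Fintype.card n = 0 := by
  have hchar : M.charpoly = Polynomial.X ^ Fintype.card n :=
    sub_eq_zero.1 (isNilpotent_charpoly_sub_pow_of_isNilpotent hM).eq_zero
  simpa [hchar] using M.aeval_self_charpoly

theorem Matrix.sub_one_pow_card_eq_zero_of_pow_eq_one {R n : Type*} [CommRing R] [IsDomain R]
    [Fintype n] [DecidableEq n] [Nonempty n] (p : ℕ) [Fact p.Prime] [CharP R p]
    {A : Matrix n n R} (hA : A ^ p = 1) : (A - 1) ^ Fintype.card n = 0 :=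
  pow_card_eq_zero_of_isNilpotent
    ⟨p, by rw [sub_pow_char_of_commute p (Commute.one_right A), hA, one_pow, sub_self]⟩

theorem Units.eq_one_of_pow_char_eq_one {R : Type*} [CommRing R] [IsReduced R] (p : ℕ)
    [ExpChar R p] {u : Rˣ} (hu : u ^ p = 1) : u = 1 :=
  Units.ext <| frobenius_inj R p <| by simp [frobenius_def, ← Units.val_pow_eq_pow_val, hu]

section Unipotent

variable {R A : Type*} [CommRing R] [Ring A] [Algebra R A] {N : A}

theorem one_add_smul_mul_one_add_smul (hN : N * N = 0) (a b : R) :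
    (1 + a • N) * (1 + b • N) = 1 + (a + b) • N := by
  simp only [mul_add, add_mul, one_mul, mul_one, smul_mul_smul_comm, hN, smul_zero, add_smul]
  abel

def unipotentHom (hN : N * N = 0) : Multiplicative R →* Aˣ where
  toFun c := ⟨1 + c.toAdd • N, 1 + (-c.toAdd) • N,
    by rw [one_add_smul_mul_one_add_smul hN, add_neg_cancel, zero_smul, add_zero],
    by rw [one_add_smul_mul_one_add_smul hN, neg_add_cancel, zero_smul, add_zero]⟩
  map_one' := by ext; simp
  map_mul' a b := by ext; simp [one_add_smul_mul_one_add_smul hN]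

@[simp]
theorem coe_unipotentHom (hN : N * N = 0) (c : Multiplicative R) :
    (unipotentHom hN c : A) = 1 + c.toAdd • N :=
  rfl

theorem Units.conj_one_add_smul (u : Aˣ) (c : R) (X : A) :
    (u : A) * (1 + c • X) * ↑u⁻¹ = 1 + c • (u * X * ↑u⁻¹) := by
  simp [mul_add, add_mul]

end Unipotent

theorem unipotentHom_range_eq_zpowers {n : ℕ} {A : Type*} [Ring A] [Algebra (ZMod n) A]
    {x : Aˣ} (hx : ((x : A) - 1) * (x - 1) = 0) :
    (unipotentHom (R := ZMod n) hx).range = Subgroup.zpowers x := by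
  have h1 : unipotentHom hx (.ofAdd (1 : ZMod n)) = x := Units.ext (by simp)
  refine le_antisymm ?_ (Subgroup.zpowers_le.2 ⟨_, h1⟩)
  rintro _ ⟨c, rfl⟩
  obtain ⟨k, rfl⟩ : ∃ k : ℤ, Multiplicative.ofAdd (1 : ZMod n) ^ k = c :=
    ⟨c.toAdd.cast, by rw [← ofAdd_zsmul, zsmul_one, ZMod.intCast_zmod_cast, ofAdd_toAdd]⟩
  exact ⟨k, by rw [map_zpow, h1]⟩

section SquareZero

variable {F : Type*} [Field F]

theorem Matrix.trace_eq_zero_of_mul_self_eq_zero {n : Type*} [Fintype n] [DecidableEq n]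
    {N : Matrix n n F} (hN : N * N = 0) : N.trace = 0 :=
  (isNilpotent_trace_of_isNilpotent ⟨2, by rw [sq, hN]⟩).eq_zero

theorem Matrix.det_eq_zero_of_mul_self_eq_zero {n : Type*} [Fintype n] [DecidableEq n]
    [Nonempty n] {N : Matrix n n F} (hN : N * N = 0) : N.det = 0 :=
  mul_self_eq_zero.1 (by rw [← det_mul, hN, det_zero])

variable {N M : Matrix (Fin 2) (Fin 2) F}

theorem Matrix.trace_det_fin_two_of_mul_self_eq_zero (hN : N * N = 0) :
    N 0 0 + N 1 1 = 0 ∧ N 0 0 * N 1 1 - N 0 1 * N 1 0 = 0 :=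
  ⟨trace_fin_two N ▸ trace_eq_zero_of_mul_self_eq_zero hN,
    det_fin_two N ▸ det_eq_zero_of_mul_self_eq_zero hN⟩

theorem Matrix.eq_single_of_mul_self_eq_zero (hN : N * N = 0) (h10 : N 1 0 = 0) :
    N = single 0 1 (N 0 1) := by
  obtain ⟨htr, hdet⟩ := trace_det_fin_two_of_mul_self_eq_zero hN
  rw [h10, mul_zero, sub_zero] at hdet
  have h00 : N 0 0 = 0 := mul_self_eq_zero.1 (by linear_combination N 0 0 * htr - hdet)
  have h11 : N 1 1 = 0 := by linear_combination htr - h00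
  ext i j
  fin_cases i <;> fin_cases j <;> simp [h00, h10, h11]

theorem Matrix.exists_mul_eq_mul_single_zero_one (hN : N * N = 0) (hN0 : N ≠ 0) :
    ∃ g : GL (Fin 2) F, N * (g : Matrix _ _ F) = (g : Matrix _ _ F) * single 0 1 1 := by
  by_cases h10 : N 1 0 = 0
  · obtain ⟨b, rfl⟩ : ∃ b, N = single 0 1 b := ⟨_, eq_single_of_mul_self_eq_zero hN h10⟩
    have hb : b ≠ 0 := by rintro rfl; exact hN0 (single_zero _ _)
    refine ⟨GeneralLinearGroup.mkOfDetNeZero !![b, 0; 0, 1]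
      (by simpa [det_fin_two] using hb), ?_⟩
    ext i j
    fin_cases i <;> fin_cases j <;> simp [mul_apply, Fin.sum_univ_two]
  · obtain ⟨htr, hdet⟩ := trace_det_fin_two_of_mul_self_eq_zero hN
    -- the columns of `g` are `N e₀` and `e₀`
    refine ⟨GeneralLinearGroup.mkOfDetNeZero !![N 0 0, 1; N 1 0, 0]
      (by simpa [det_fin_two] using h10), ?_⟩
    ext i j
    fin_cases i <;> fin_cases j <;> simp [mul_apply, Fin.sum_univ_two]
    · linear_combination N 0 0 * htr - hdet
    · linear_combination N 1 0 * htr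

theorem Matrix.mul_transvection_eq_transvection_mul_single (hN : N * N = 0) (h10 : N 1 0 ≠ 0) :
    N * transvection 0 1 (N 0 0 / N 1 0) =
      transvection 0 1 (N 0 0 / N 1 0) * single 1 0 (N 1 0) := by
  obtain ⟨htr, hdet⟩ := trace_det_fin_two_of_mul_self_eq_zero hN
  ext i j
  fin_cases i <;> fin_cases j <;> simp [transvection, mul_apply, Fin.sum_univ_two, one_apply]
  · rw [div_mul_cancel₀ _ h10]
  · field_simp
    linear_combination N 0 0 * htr - hdet
  · rw [mul_div_cancel₀ _ h10, htr]

theorem Matrix.exists_mul_eq_mul_single_of_forall_ne_smul (hN : N * N = 0) (hM : M * M = 0)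
    (hN0 : N ≠ 0) (hMN : ∀ c : F, M ≠ c • N) :
    ∃ (g : GL (Fin 2) F) (t : F), t ≠ 0 ∧
      N * (g : Matrix _ _ F) = (g : Matrix _ _ F) * single 0 1 1 ∧
      M * (g : Matrix _ _ F) = (g : Matrix _ _ F) * single 1 0 t := by
  obtain ⟨g, hNg⟩ := exists_mul_eq_mul_single_zero_one hN hN0
  obtain ⟨M', hMg⟩ : ∃ M' : Matrix (Fin 2) (Fin 2) F, M * g = g * M' :=
    ⟨(g⁻¹ : GL (Fin 2) F) * M * g, by simp only [← mul_assoc, Units.mul_inv, one_mul]⟩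
  have hM' : M' * M' = 0 := by
    rw [← Units.inv_mul_cancel_left g M', ← hMg]
    simp only [mul_assoc, Units.mul_inv_cancel_left]
    simp only [← mul_assoc M, hM, zero_mul, mul_zero]
  have h10 : M' 1 0 ≠ 0 := by
    intro h10
    obtain ⟨b, hb⟩ : ∃ b, M' = single 0 1 b := ⟨_, eq_single_of_mul_self_eq_zero hM' h10⟩
    refine hMN b ?_
    have hb1 : single 0 1 b = b • single (0 : Fin 2) (1 : Fin 2) (1 : F) := by
      rw [smul_single, smul_eq_mul, mul_one]
    rw [(Units.eq_mul_inv_iff_mul_eq g).2 hMg, (Units.eq_mul_inv_iff_mul_eq g).2 hNg, hb,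
      hb1, mul_smul_comm, smul_mul_assoc]
  set T := SpecialLinearGroup.toGL
    (SpecialLinearGroup.transvection (zero_ne_one' (Fin 2)) (M' 0 0 / M' 1 0))
  have hT : (T : Matrix (Fin 2) (Fin 2) F) = transvection 0 1 (M' 0 0 / M' 1 0) := rfl
  refine ⟨g * T, M' 1 0, h10, ?_, ?_⟩
  · rw [Units.val_mul, ← mul_assoc, hNg, mul_assoc, mul_assoc, hT]
    congr 1
    simp [transvection, mul_add, add_mul]
  · rw [Units.val_mul, ← mul_assoc, hMg, mul_assoc, mul_assoc, hT,
      mul_transvection_eq_transvection_mul_single hM' h10]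

namespace Matrix.GeneralLinearGroup

theorem ker_det_le_of_conj_transvection_mem {K : Subgroup (GL (Fin 2) F)} (g : GL (Fin 2) F)
    (h01 : ∀ c : F, MulAut.conj g
      (SpecialLinearGroup.toGL (SpecialLinearGroup.transvection zero_ne_one c)) ∈ K)
    (h10 : ∀ c : F, MulAut.conj g
      (SpecialLinearGroup.toGL (SpecialLinearGroup.transvection one_ne_zero c)) ∈ K) :
    det.ker ≤ K := by
  intro X hX
  have hA : (↑(g⁻¹ * X * g) : Matrix (Fin 2) (Fin 2) F).det = 1 := by
    rw [← val_det_apply, map_mul, map_mul, MonoidHom.mem_ker.1 hX]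
    simp
  have hmem := SL2.transvection_induction
    (· ∈ K.comap ((MulAut.conj g).toMonoidHom.comp SpecialLinearGroup.toGL))
    (fun i j hij c => by
      fin_cases i <;> fin_cases j
      exacts [absurd rfl hij, h01 c, h10 c, absurd rfl hij])
    (fun _ _ => mul_mem) ⟨_, hA⟩
  have hX : MulAut.conj g (SpecialLinearGroup.toGL ⟨_, hA⟩) = X := by
    rw [show SpecialLinearGroup.toGL ⟨_, hA⟩ = g⁻¹ * X * g from Units.ext rfl,
      MulAut.conj_apply]
    group
  exact hX ▸ hmem

theorem ker_det_le_of_range_unipotentHom_le {K : Subgroup (GL (Fin 2) F)}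
    (hN : N * N = 0) (hM : M * M = 0) (hN0 : N ≠ 0) (hMN : ∀ c : F, M ≠ c • N)
    (hNK : (unipotentHom (R := F) hN).range ≤ K) (hMK : (unipotentHom (R := F) hM).range ≤ K) :
    det.ker ≤ K := by
  obtain ⟨g, t, ht, hNg, hMg⟩ := exists_mul_eq_mul_single_of_forall_ne_smul hN hM hN0 hMN
  refine ker_det_le_of_conj_transvection_mem g (fun c => hNK ⟨.ofAdd c, Units.ext ?_⟩)
    (fun c => hMK ⟨.ofAdd (c / t), Units.ext ?_⟩)
  · have hc : single 0 1 c = c • single (0 : Fin 2) (1 : Fin 2) (1 : F) := by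
      rw [smul_single, smul_eq_mul, mul_one]
    rw [coe_unipotentHom, toAdd_ofAdd, MulAut.conj_apply, Units.val_mul, Units.val_mul,
      SpecialLinearGroup.coe_GL_coe_matrix, SpecialLinearGroup.transvection_coe, hc,
      Units.conj_one_add_smul, ← (Units.eq_mul_inv_iff_mul_eq g).2 hNg]
  · have hc : single 1 0 c = (c / t) • single (1 : Fin 2) (0 : Fin 2) t := by
      rw [smul_single, smul_eq_mul, div_mul_cancel₀ _ ht]
    rw [coe_unipotentHom, toAdd_ofAdd, MulAut.conj_apply, Units.val_mul, Units.val_mul,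
      SpecialLinearGroup.coe_GL_coe_matrix, SpecialLinearGroup.transvection_coe, hc,
      Units.conj_one_add_smul, ← (Units.eq_mul_inv_iff_mul_eq g).2 hMg]

theorem card_ker_det [Fintype F] :
    Nat.card (det : GL (Fin 2) F →* Fˣ).ker = Fintype.card F ^ 3 - Fintype.card F := by
  have hcard := (det : GL (Fin 2) F →* Fˣ).ker.card_mul_index
  rw [Subgroup.index_ker, MonoidHom.range_eq_top.2 det_surjective, Subgroup.card_top,
    Nat.card_units, Nat.card_eq_fintype_card (α := F), card_GL_field, Fin.prod_univ_two,
    Fin.val_zero, Fin.val_one, pow_zero, pow_one] at hcard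
  have hq : 1 < Fintype.card F := Fintype.one_lt_card
  generalize Fintype.card F = q at hcard hq ⊢
  refine Nat.eq_of_mul_eq_mul_right (Nat.sub_pos_of_lt hq) (hcard.trans ?_)
  have h2 : q ≤ q ^ 2 := Nat.le_self_pow two_ne_zero q
  have h3 : q ≤ q ^ 3 := Nat.le_self_pow three_ne_zero q
  zify [hq.le, h2, h3, Nat.one_le_pow 2 q (by omega)]
  ring

variable {p : ℕ} [Fact p.Prime]

theorem mul_self_sub_one_eq_zero_of_pow_eq_one [CharP F p] {x : GL (Fin 2) F}
    (hx : x ^ p = 1) : ((x : Matrix (Fin 2) (Fin 2) F) - 1) * (x - 1) = 0 := by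
  have hx' : (x : Matrix (Fin 2) (Fin 2) F) ^ p = 1 := by
    rw [← Units.val_pow_eq_pow_val, hx, Units.val_one]
  simpa [sq] using sub_one_pow_card_eq_zero_of_pow_eq_one p hx'

theorem det_eq_one_of_pow_eq_one {n : Type*} [Fintype n] [DecidableEq n] [CharP F p]
    {x : GL n F} (hx : x ^ p = 1) : det x = 1 :=
  Units.eq_one_of_pow_char_eq_one p (by rw [← map_pow, hx, map_one])

end Matrix.GeneralLinearGroup

end SquareZero

namespace Matrix.GeneralLinearGroup

theorem card_closure_dvd_or_closure_eq_ker_det {p : ℕ} [Fact p.Prime]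
    {S : Set (GL (Fin 2) (ZMod p))} (hS : ∀ x ∈ S, x ^ p = 1) :
    Nat.card (Subgroup.closure S) ∣ p ∨ Subgroup.closure S = det.ker := by
  by_cases h : ∃ u ∈ S, u ≠ 1 ∧ ∃ v ∈ S, v ∉ Subgroup.zpowers u
  · obtain ⟨u, hu, hu1, v, hv, hvu⟩ := h
    have hN := mul_self_sub_one_eq_zero_of_pow_eq_one (hS u hu)
    have hM := mul_self_sub_one_eq_zero_of_pow_eq_one (hS v hv)
    have hNu := unipotentHom_range_eq_zpowers (n := p) hN
    have hMv := unipotentHom_range_eq_zpowers (n := p) hM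
    have hMN : ∀ c : ZMod p, (v : Matrix (Fin 2) (Fin 2) (ZMod p)) - 1 ≠
        c • ((u : Matrix (Fin 2) (Fin 2) (ZMod p)) - 1) := by
      intro c hc
      refine hvu (hNu ▸ ⟨.ofAdd c, Units.ext ?_⟩)
      rw [coe_unipotentHom, toAdd_ofAdd, ← hc, add_sub_cancel]
    refine .inr (le_antisymm
      ((Subgroup.closure_le _).2 fun x hx => det_eq_one_of_pow_eq_one (hS x hx)) ?_)
    exact ker_det_le_of_range_unipotentHom_le hN hM
      (sub_ne_zero.2 (Units.val_eq_one.not.2 hu1)) hMN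
      (hNu ▸ Subgroup.zpowers_le.2 (Subgroup.subset_closure hu))
      (hMv ▸ Subgroup.zpowers_le.2 (Subgroup.subset_closure hv))
  · refine .inl ?_
    obtain ⟨u, hu, hSu⟩ : ∃ u : GL (Fin 2) (ZMod p), u ^ p = 1 ∧ S ⊆ Subgroup.zpowers u := by
      by_cases h1 : ∃ u ∈ S, u ≠ 1
      · obtain ⟨u, hu, hu1⟩ := h1
        push Not at h
        exact ⟨u, hS u hu, h u hu hu1⟩
      · push Not at h1
        exact ⟨1, one_pow p, fun x hx => by simp [h1 x hx]⟩
    calc Nat.card (Subgroup.closure S) ∣ Nat.card (Subgroup.zpowers u) :=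
          Subgroup.card_dvd_of_le ((Subgroup.closure_le _).2 hSu)
      _ = orderOf u := Nat.card_zpowers u
      _ ∣ p := orderOf_dvd_of_pow_eq_one hu

end Matrix.GeneralLinearGroup

/-- Corollary 2.10, after Nori: for a prime `p` and a subgroup `H` of
`GL₂(𝔽_p)`, the subgroup `H⁺` generated by the elements `x ∈ H` with `x^p = 1` has order
`1`, `p`, or `p³ − p`. -/
theorem nori_corollary (p : ℕ) (hp : p.Prime)
    (H : Subgroup (Matrix.GeneralLinearGroup (Fin 2) (ZMod p))) :
    Nat.card (Subgroup.closure
        {x : Matrix.GeneralLinearGroup (Fin 2) (ZMod p) | x ∈ H ∧ x ^ p = 1}) = 1 ∨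
      Nat.card (Subgroup.closure
        {x : Matrix.GeneralLinearGroup (Fin 2) (ZMod p) | x ∈ H ∧ x ^ p = 1}) = p ∨
      Nat.card (Subgroup.closure
        {x : Matrix.GeneralLinearGroup (Fin 2) (ZMod p) | x ∈ H ∧ x ^ p = 1}) = p ^ 3 - p := by
  have := Fact.mk hp
  rcases GeneralLinearGroup.card_closure_dvd_or_closure_eq_ker_det
    (S := {x | x ∈ H ∧ x ^ p = 1}) fun x hx => hx.2 with h | h
  · exact (hp.eq_one_or_self_of_dvd _ h).imp id .inl
  · rw [h, GeneralLinearGroup.card_ker_det, ZMod.card]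
    exact .inr (.inr rfl)
end
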